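/- arXiv:math/0401192 — 3 statements merged into one kernel-verified Lean document; each statement's English description precedes it below -/
import Mathlib

section
/- Let R be a commutative ring and n a positive integer. Suppose there exist units b, c ∈ R such that for every positive integer m the ideal of R generated by b^m − 1 and c^m − 1 is all of R. Then every α ∈ GI^c_n(R) is a single commutator: there exist β, γ ∈ GA^c_n(R) with α = β∘γ∘β⁻¹∘γ⁻¹. -/
open MvPowerSeries

/-- The topology of coefficientwise convergence on `R[[X₁,…,Xₙ]]` (with `R` discrete):
the product topology on the coefficient functions, `R` carrying the discrete topology. -/
noncomputable def mvPiTopology (σ R : Type*) : TopologicalSpace (MvPowerSeries σ R) :=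
  @Pi.topologicalSpace (σ →₀ ℕ) (fun _ => R) (fun _ => ⊥)

/-- The augmentation ideal `M = (X₁,…,Xₙ)` of `R[[X₁,…,Xₙ]]`, i.e. the ideal generated
by the variables; it consists of the power series with zero constant term. -/
noncomputable def augIdeal (σ R : Type*) [CommRing R] : Ideal (MvPowerSeries σ R) :=
  Ideal.span (Set.range (X : σ → MvPowerSeries σ R))

/-- `GA^c_n(R)`: an `R`-algebra automorphism of `R[[X₁,…,Xₙ]]` belongs to `GA^c_n(R)` iff it is
continuous for the topology of coefficientwise convergence and augmented, i.e. each `φ(Xᵢ)` has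
zero constant coefficient. -/
noncomputable def GAc {R : Type*} [CommRing R] {n : ℕ}
    (φ : MvPowerSeries (Fin n) R ≃ₐ[R] MvPowerSeries (Fin n) R) : Prop :=
  @Continuous _ _ (mvPiTopology (Fin n) R) (mvPiTopology (Fin n) R) φ ∧
    ∀ i, constantCoeff (φ (X i)) = 0

/-- `GI^c_n(R)`: those `φ ∈ GA^c_n(R)` with `φ(Xᵢ) - Xᵢ ∈ M²` for all `i`. -/
noncomputable def GIc {R : Type*} [CommRing R] {n : ℕ}
    (φ : MvPowerSeries (Fin n) R ≃ₐ[R] MvPowerSeries (Fin n) R) : Prop :=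
  GAc φ ∧ ∀ i, φ (X i) - X i ∈ (augIdeal (Fin n) R) ^ 2

/-- Membership in `[GA^c_n(R), GA^c_n(R)]^{(k)}`: `α` is a product of `k` commutators
`[β,γ] = β∘γ∘β⁻¹∘γ⁻¹` of elements of `GA^c_n(R)`.  (The group structure on automorphisms is
composition: `(β * γ) f = β (γ f)`.) -/
noncomputable def IsProdOfCommutators {R : Type*} [CommRing R] {n : ℕ} (k : ℕ)
    (α : MvPowerSeries (Fin n) R ≃ₐ[R] MvPowerSeries (Fin n) R) : Prop :=
  ∃ β γ : Fin k → (MvPowerSeries (Fin n) R ≃ₐ[R] MvPowerSeries (Fin n) R),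
    (∀ j, GAc (β j) ∧ GAc (γ j)) ∧
    α = (List.ofFn (fun j => β j * γ j * (β j)⁻¹ * (γ j)⁻¹)).prod

/-!
Every `α ∈ GI^c_n(R)` is the substitution `X ↦ A` with `A ≡ X mod M²`. We look for
`β = subst (b • P)` and `γ = subst (c • Q)` with `P, Q ≡ X mod M²` and `α γ β = β γ`, and solve for
`P` and `Q` one degree at a time: changing `P` by `t` and `Q` by `s` in degree `m` changes the
degree-`m` part of `(β γ)(X) - (α γ β)(X)` by `b c ((1 - c^(m-1)) t + (b^(m-1) - 1) s)`, and as
`b^(m-1) - 1` and `c^(m-1) - 1` generate `R`, this can cancel any error. The successive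
approximations stabilise coefficientwise, so they have a limit. The same degree-by-degree argument
shows that a substitution whose linear part is a unit multiple of the identity is bijective.
-/

open Finsupp

namespace MvPowerSeries

section Order

variable {σ R : Type*} [CommRing R]

theorem le_order_add {k : ℕ∞} {f g : MvPowerSeries σ R} (hf : k ≤ f.order) (hg : k ≤ g.order) :
    k ≤ (f + g).order :=
  (le_min hf hg).trans min_order_le_add

theorem le_order_sub {k : ℕ∞} {f g : MvPowerSeries σ R} (hf : k ≤ f.order) (hg : k ≤ g.order) :
    k ≤ (f - g).order := by
  rw [sub_eq_add_neg]
  exact le_order_add hf (by rwa [order_neg])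

theorem le_order_smul_sub_smul {k : ℕ∞} {f g : MvPowerSeries σ R} (h : k ≤ (f - g).order)
    (r : R) : k ≤ (r • f - r • g).order := by
  rw [← smul_sub]
  exact h.trans le_order_smul

theorem eq_of_forall_le_order_sub {f g : MvPowerSeries σ R} (h : ∀ k : ℕ, ↑k ≤ (f - g).order) :
    f = g :=
  sub_eq_zero.mp (order_eq_top_iff.mp (ENat.eq_top_iff_forall_ge.mpr h))

theorem le_order_homogeneousComponent (k : ℕ) (f : MvPowerSeries σ R) :
    ↑k ≤ (homogeneousComponent k f).order :=
  le_order fun e he => by rw [coeff_homogeneousComponent, if_neg (Nat.cast_lt.mp he).ne]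

theorem exists_le_order_sub_of_le_order_succ_sub (u : ℕ → MvPowerSeries σ R)
    (h : ∀ k, ↑k ≤ (u (k + 1) - u k).order) : ∃ g, ∀ k, ↑k ≤ (g - u k).order := by
  have hstab (e : σ →₀ ℕ) (k : ℕ) (hk : e.degree < k) :
      coeff e (u k) = coeff e (u (e.degree + 1)) := by
    induction k, hk using Nat.le_induction with
    | base => rfl
    | succ k hk ih =>
      rw [← ih, ← sub_eq_zero, ← map_sub]
      exact coeff_of_lt_order ((Nat.cast_lt.mpr hk).trans_le (h k))
  let g : MvPowerSeries σ R := fun e => coeff e (u (e.degree + 1))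
  refine ⟨g, fun k => le_order fun e he => ?_⟩
  rw [map_sub, hstab e k (Nat.cast_lt.mp he)]
  exact sub_self _

theorem le_order_pow_sub_pow {f g : MvPowerSeries σ R} (hf : constantCoeff f = 0)
    (hg : constantCoeff g = 0) {k : ℕ} (hfg : ↑(k + 1) ≤ (f - g).order) (m : ℕ) :
    ↑(m + k) ≤ (f ^ m - g ^ m).order := by
  induction m with
  | zero => simp
  | succ m ih =>
    rw [show f ^ (m + 1) - g ^ (m + 1) = (f - g) * f ^ m + g * (f ^ m - g ^ m) by ring]
    refine le_order_add (le_trans ?_ le_order_mul) (le_trans ?_ le_order_mul)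
    · grw [← hfg, ← le_order_pow_of_constantCoeff_eq_zero m hf]
      push_cast
      exact le_of_eq (by ring)
    · grw [← ih, ← one_le_order_iff_constCoeff_eq_zero.mpr hg]
      push_cast
      exact le_of_eq (by ring)

theorem prod_pow_single_add (a : σ → MvPowerSeries σ R) (i : σ) (m : ℕ) (d : σ →₀ ℕ) :
    ((single i m + d).prod fun j k => a j ^ k) = a i ^ m * d.prod fun j k => a j ^ k := by
  rw [prod_add_index' (fun _ => pow_zero _) (fun _ _ _ => pow_add _ _ _),
    prod_single_index (h := fun j k => a j ^ k) (pow_zero _)]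

theorem le_order_prod_pow {a : σ → MvPowerSeries σ R} (ha : ∀ i, constantCoeff (a i) = 0)
    (d : σ →₀ ℕ) : ↑d.degree ≤ (d.prod fun i m => a i ^ m).order := by
  induction d using Finsupp.induction with
  | zero => simp
  | single_add i m d _ _ ih =>
    rw [prod_pow_single_add, map_add, degree_single, Nat.cast_add]
    grw [← le_order_mul, ← ih, ← le_order_pow_of_constantCoeff_eq_zero m (ha i)]

theorem le_order_prod_pow_sub_prod_pow {a b : σ → MvPowerSeries σ R}
    (ha : ∀ i, constantCoeff (a i) = 0) (hb : ∀ i, constantCoeff (b i) = 0) {k : ℕ}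
    (hab : ∀ i, ↑(k + 1) ≤ (a i - b i).order) (d : σ →₀ ℕ) :
    ↑(d.degree + k) ≤ ((d.prod fun i m => a i ^ m) - d.prod fun i m => b i ^ m).order := by
  induction d using Finsupp.induction with
  | zero => simp
  | single_add i m d _ _ ih =>
    rw [prod_pow_single_add, prod_pow_single_add,
      show ∀ x y z w : MvPowerSeries σ R, x * y - z * w = (x - z) * y + z * (y - w) by
        intros; ring]
    refine le_order_add (le_trans ?_ le_order_mul) (le_trans ?_ le_order_mul)
    · grw [← le_order_pow_sub_pow (ha i) (hb i) (hab i) m, ← le_order_prod_pow ha d]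
      simp only [map_add, degree_single]
      push_cast
      exact le_of_eq (by ring)
    · grw [← ih, ← le_order_pow_of_constantCoeff_eq_zero m (hb i)]
      simp only [map_add, degree_single]
      push_cast
      exact le_of_eq (by ring)

theorem two_le_order_of_mem_augIdeal_sq {f : MvPowerSeries σ R} (hf : f ∈ augIdeal σ R ^ 2) :
    2 ≤ f.order := by
  have hle : augIdeal σ R ≤ RingHom.ker constantCoeff :=
    Ideal.span_le.mpr (Set.range_subset_iff.mpr fun i => by simp)
  rw [pow_two] at hf
  refine Submodule.mul_induction_on hf (fun x hx y hy => ?_) fun x y => le_order_add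
  grw [← le_order_mul, ← one_le_order_iff_constCoeff_eq_zero.mpr (hle hx),
    ← one_le_order_iff_constCoeff_eq_zero.mpr (hle hy)]
  rfl

theorem coeff_single_one_of_two_le_order_sub [DecidableEq σ] {u : R} {f : MvPowerSeries σ R}
    {i : σ} (hf : 2 ≤ (f - u • X i).order) (j : σ) :
    coeff (single j 1) f = if j = i then u else 0 := by
  have h := coeff_of_lt_order (lt_of_lt_of_le (by simp) hf) (d := single j 1)
  rw [map_sub, sub_eq_zero] at h
  simp [h, coeff_X, single_left_inj one_ne_zero]

end Order

section LinearPart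

variable {σ R : Type*} [CommRing R]

def HasScalarLinearPart (u : R) (a : σ → MvPowerSeries σ R) : Prop :=
  ∀ i, 2 ≤ (a i - u • X i).order

theorem hasScalarLinearPart_X : HasScalarLinearPart (1 : R) (X : σ → MvPowerSeries σ R) :=
  fun i => by simp

namespace HasScalarLinearPart

variable {u : R} {a : σ → MvPowerSeries σ R}

theorem constantCoeff_eq_zero (ha : HasScalarLinearPart u a) (i : σ) :
    constantCoeff (a i) = 0 := by
  simpa using one_le_order_iff_constCoeff_eq_zero.mp (le_trans (by norm_num) (ha i))

theorem of_le_order_sub (ha : HasScalarLinearPart u a) {a' : σ → MvPowerSeries σ R}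
    (h : ∀ i, 2 ≤ (a' i - a i).order) : HasScalarLinearPart u a' := fun i => by
  rw [show a' i - u • X i = (a' i - a i) + (a i - u • X i) by ring]
  exact le_order_add (h i) (ha i)

theorem smul (ha : HasScalarLinearPart u a) (v : R) : HasScalarLinearPart (v * u) (v • a) :=
  fun i => by
    rw [Pi.smul_apply, mul_smul]
    exact le_order_smul_sub_smul (ha i) v

theorem coeff_prod_pow [DecidableEq σ] (ha : HasScalarLinearPart u a) {d e : σ →₀ ℕ}
    (he : e.degree ≤ d.degree) :
    coeff e (d.prod fun i m => a i ^ m) = if e = d then u ^ d.degree else 0 := by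
  have h := le_order_prod_pow_sub_prod_pow ha.constantCoeff_eq_zero (fun i => by simp) (k := 1) ha d
  have hcoeff := coeff_of_lt_order (lt_of_lt_of_le (Nat.cast_lt.mpr (Nat.lt_succ_of_le he)) h)
  rwa [map_sub, sub_eq_zero, ← monomial_smul_const, coeff_monomial] at hcoeff

end HasScalarLinearPart

end LinearPart

section Subst

variable {σ R : Type*} [CommRing R] [Finite σ]

theorem coeff_subst_eq_sum {a : σ → MvPowerSeries σ R} (ha : ∀ i, constantCoeff (a i) = 0)
    (f : MvPowerSeries σ R) (e : σ →₀ ℕ) :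
    coeff e (subst a f) = ∑ d ∈ (finite_of_degree_le e.degree).toFinset,
      coeff d f * coeff e (d.prod fun i m => a i ^ m) := by
  rw [coeff_subst (hasSubst_of_constantCoeff_zero ha)]
  refine finsum_eq_sum_of_support_subset _ fun d hd => ?_
  rw [Set.Finite.coe_toFinset, Set.mem_ofPred_eq]
  by_contra! hlt
  refine hd ?_
  simp only [smul_eq_mul]
  rw [coeff_of_lt_order ((Nat.cast_lt.mpr hlt).trans_le (le_order_prod_pow ha d)), mul_zero]

theorem coeff_subst_sub_subst {a a' : σ → MvPowerSeries σ R} (ha : ∀ i, constantCoeff (a i) = 0)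
    (ha' : ∀ i, constantCoeff (a' i) = 0) (f : MvPowerSeries σ R) (e : σ →₀ ℕ) :
    coeff e (subst a' f - subst a f) = ∑ d ∈ (finite_of_degree_le e.degree).toFinset,
      coeff d f * coeff e ((d.prod fun i m => a' i ^ m) - d.prod fun i m => a i ^ m) := by
  simp only [map_sub, coeff_subst_eq_sum ha, coeff_subst_eq_sum ha', mul_sub,
    Finset.sum_sub_distrib]

theorem order_le_order_subst {a : σ → MvPowerSeries σ R} (ha : ∀ i, constantCoeff (a i) = 0)
    (f : MvPowerSeries σ R) : f.order ≤ (subst a f).order := by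
  refine le_trans ?_ (le_order_subst (hasSubst_of_constantCoeff_zero ha) f)
  grw [← le_iInf fun i => one_le_order_iff_constCoeff_eq_zero.mpr (ha i), one_mul]

theorem le_order_subst_sub_subst {a a' : σ → MvPowerSeries σ R}
    (ha : ∀ i, constantCoeff (a i) = 0) (ha' : ∀ i, constantCoeff (a' i) = 0) {k : ℕ}
    (haa : ∀ i, ↑k ≤ (a' i - a i).order) {f f' : MvPowerSeries σ R} (hff : ↑k ≤ (f' - f).order) :
    ↑k ≤ (subst a' f' - subst a f).order := by
  rcases k with _ | k
  · simp
  rw [show subst a' f' - subst a f = subst a' (f' - f) + (subst a' f - subst a f) by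
    rw [subst_sub (hasSubst_of_constantCoeff_zero ha')]; ring]
  refine le_order_add (hff.trans (order_le_order_subst ha' _)) (le_order fun e he => ?_)
  rw [coeff_subst_sub_subst ha ha']
  refine Finset.sum_eq_zero fun d _ => ?_
  rcases eq_or_ne d 0 with rfl | hd
  · simp
  have hd1 : 1 ≤ d.degree := Nat.one_le_iff_ne_zero.mpr ((degree_eq_zero_iff d).not.mpr hd)
  have hlt : e.degree < d.degree + k := by have := Nat.cast_lt.mp he; omega
  rw [coeff_of_lt_order ((Nat.cast_lt.mpr hlt).trans_le
    (le_order_prod_pow_sub_prod_pow ha' ha haa d)), mul_zero]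

theorem HasScalarLinearPart.coeff_subst {u : R} {a : σ → MvPowerSeries σ R}
    (ha : HasScalarLinearPart u a) {m : ℕ} {f : MvPowerSeries σ R} (hf : ↑m ≤ f.order)
    {e : σ →₀ ℕ} (he : e.degree = m) : coeff e (subst a f) = u ^ m * coeff e f := by
  classical
  rw [coeff_subst_eq_sum ha.constantCoeff_eq_zero, Finset.sum_eq_single e]
  · rw [ha.coeff_prod_pow le_rfl, if_pos rfl, he, mul_comm]
  · intro d hd hde
    rw [Set.Finite.mem_toFinset, Set.mem_ofPred_eq] at hd
    rcases hd.lt_or_eq with hlt | heq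
    · rw [coeff_of_lt_order ((Nat.cast_lt.mpr (he ▸ hlt)).trans_le hf), zero_mul]
    · rw [ha.coeff_prod_pow heq.ge, if_neg (Ne.symm hde), mul_zero]
  · intro h
    exact absurd (by simp) h

theorem coeff_subst_sub_subst_of_degree_eq {a a' : σ → MvPowerSeries σ R}
    (ha : ∀ i, constantCoeff (a i) = 0) (ha' : ∀ i, constantCoeff (a' i) = 0) {m : ℕ}
    (hm : 2 ≤ m) (haa : ∀ i, ↑m ≤ (a' i - a i).order) {w : R} {i : σ} {f : MvPowerSeries σ R}
    (hf : 2 ≤ (f - w • X i).order) {e : σ →₀ ℕ} (he : e.degree = m) :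
    coeff e (subst a' f - subst a f) = w * coeff e (a' i - a i) := by
  classical
  rw [coeff_subst_sub_subst ha ha', Finset.sum_eq_single (single i 1)]
  · simp [coeff_single_one_of_two_le_order_sub hf, prod_single_index]
  · intro d _ hdi
    by_cases hd : 2 ≤ d.degree
    · have htel := le_order_prod_pow_sub_prod_pow ha' ha (k := m - 1)
        (fun i => (Nat.sub_add_cancel (by omega : 1 ≤ m)).symm ▸ haa i) d
      rw [coeff_of_lt_order ((Nat.cast_lt.mpr (by omega)).trans_le htel), mul_zero]
    rcases (Nat.lt_succ_iff.mp (not_le.mp hd)).lt_or_eq with h0 | h1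
    · simp [(degree_eq_zero_iff d).mp (Nat.lt_one_iff.mp h0)]
    · obtain ⟨j, rfl⟩ : d ∈ Set.range (single · 1) := (range_single_one (σ := σ)).symm ▸ h1
      rw [coeff_single_one_of_two_le_order_sub hf, if_neg (by rintro rfl; exact hdi rfl),
        zero_mul]
  · intro h
    exact absurd (by simp; omega) h

theorem HasScalarLinearPart.coeff_subst_sub_subst {u w : R} {a a' : σ → MvPowerSeries σ R}
    (ha : HasScalarLinearPart u a) {i : σ} {f f' : MvPowerSeries σ R}
    (hf : 2 ≤ (f - w • X i).order) {m : ℕ} (hm : 2 ≤ m) (haa : ∀ j, ↑m ≤ (a' j - a j).order)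
    (hff : ↑m ≤ (f' - f).order) {e : σ →₀ ℕ} (he : e.degree = m) :
    coeff e (subst a' f' - subst a f) = w * coeff e (a' i - a i) + u ^ m * coeff e (f' - f) := by
  have ha' : HasScalarLinearPart u a' :=
    ha.of_le_order_sub fun j => le_trans (by exact_mod_cast hm) (haa j)
  rw [show subst a' f' - subst a f = subst a' (f' - f) + (subst a' f - subst a f) by
      rw [subst_sub (hasSubst_of_constantCoeff_zero ha'.constantCoeff_eq_zero)]; ring,
    map_add, ha'.coeff_subst hff he, coeff_subst_sub_subst_of_degree_eq ha.constantCoeff_eq_zero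
      ha'.constantCoeff_eq_zero hm haa hf he, add_comm]

theorem HasScalarLinearPart.subst_injective {u : Rˣ} {a : σ → MvPowerSeries σ R}
    (ha : HasScalarLinearPart (u : R) a) : Function.Injective (subst (R := R) a) := by
  intro f g hfg
  by_contra hne
  have hzero : subst a (f - g) = 0 := by
    rw [subst_sub (hasSubst_of_constantCoeff_zero ha.constantCoeff_eq_zero), hfg, sub_self]
  have hfin := ne_zero_iff_order_finite.mp (sub_ne_zero.mpr hne)
  obtain ⟨e, hcoeff, hdeg⟩ := exists_coeff_ne_zero_and_order hfin
  have := ha.coeff_subst (le_of_eq hfin) (Nat.cast_injective (hdeg.trans hfin.symm))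
  rw [hzero, map_zero, eq_comm, ← Units.val_pow_eq_pow_val, Units.mul_right_eq_zero] at this
  exact hcoeff this

theorem HasScalarLinearPart.subst_surjective {u : Rˣ} {a : σ → MvPowerSeries σ R}
    (ha : HasScalarLinearPart (u : R) a) : Function.Surjective (subst (R := R) a) := by
  intro g
  have hsubst := hasSubst_of_constantCoeff_zero ha.constantCoeff_eq_zero
  let approx : ℕ → MvPowerSeries σ R := fun k => Nat.rec 0
    (fun k f => f + ((u ^ k)⁻¹ : Rˣ) • homogeneousComponent k (g - subst a f)) k
  have hstep (k : ℕ) : ↑k ≤ (approx (k + 1) - approx k).order := by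
    change ↑k ≤ (approx k + _ - approx k).order
    rw [add_sub_cancel_left]
    exact (le_order_homogeneousComponent k _).trans le_order_smul
  have herr (k : ℕ) : ↑k ≤ (g - subst a (approx k)).order := by
    induction k with
    | zero => simp
    | succ k ih =>
      set E := g - subst a (approx k)
      set h := ((u ^ k)⁻¹ : Rˣ) • homogeneousComponent k E
      have hh : ↑k ≤ h.order := (le_order_homogeneousComponent k E).trans le_order_smul
      change ↑(k + 1) ≤ (g - subst a (approx k + h)).order
      rw [subst_add hsubst, ← sub_sub]
      refine le_order fun e he => ?_
      rcases (Nat.lt_succ_iff.mp (Nat.cast_lt.mp he)).lt_or_eq with hlt | heq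
      · rw [map_sub, coeff_of_lt_order ((Nat.cast_lt.mpr hlt).trans_le ih),
          coeff_of_lt_order ((Nat.cast_lt.mpr hlt).trans_le
            (hh.trans (order_le_order_subst ha.constantCoeff_eq_zero h))), sub_self]
      · have hcoeff : coeff e h = ((u ^ k)⁻¹ : Rˣ) * coeff e E := by
          simp only [h, Units.smul_def, map_smul, coeff_homogeneousComponent, if_pos heq,
            smul_eq_mul]
        rw [map_sub, ha.coeff_subst hh heq, hcoeff, ← Units.val_pow_eq_pow_val,
          Units.mul_inv_cancel_left, sub_self]
  obtain ⟨f, hf⟩ := exists_le_order_sub_of_le_order_succ_sub approx hstep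
  refine ⟨f, (eq_of_forall_le_order_sub fun k => ?_).symm⟩
  rw [← sub_sub_sub_cancel_right g (subst a f) (subst a (approx k))]
  exact le_order_sub (herr k) (le_order_subst_sub_subst ha.constantCoeff_eq_zero
    ha.constantCoeff_eq_zero (fun i => by simp) (hf k))

noncomputable def substAlgEquiv {u : Rˣ} {a : σ → MvPowerSeries σ R}
    (ha : HasScalarLinearPart (u : R) a) : MvPowerSeries σ R ≃ₐ[R] MvPowerSeries σ R :=
  AlgEquiv.ofBijective (substAlgHom (hasSubst_of_constantCoeff_zero ha.constantCoeff_eq_zero))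
    (by rw [coe_substAlgHom]; exact ⟨ha.subst_injective, ha.subst_surjective⟩)

theorem coe_substAlgEquiv {u : Rˣ} {a : σ → MvPowerSeries σ R}
    (ha : HasScalarLinearPart (u : R) a) : ⇑(substAlgEquiv ha) = subst a :=
  coe_substAlgHom (hasSubst_of_constantCoeff_zero ha.constantCoeff_eq_zero)

end Subst

section Topology

open WithPiTopology

theorem mvPiTopology_eq {σ R : Type*} [UniformSpace R] [DiscreteUniformity R] :
    mvPiTopology σ R = WithPiTopology.instTopologicalSpace R := by
  rw [mvPiTopology, DiscreteTopology.eq_bot (α := R)]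
  rfl

variable {σ R : Type*} [CommRing R]

theorem continuous_subst_mvPiTopology {a : σ → MvPowerSeries σ R} (ha : HasSubst a) :
    @Continuous _ _ (mvPiTopology σ R) (mvPiTopology σ R) (subst (R := R) a) := by
  let _ : UniformSpace R := ⊥
  have _ : DiscreteUniformity R := ⟨rfl⟩
  rw [mvPiTopology_eq]
  exact continuous_subst ha

theorem eq_subst_of_continuous [Finite σ] (α : MvPowerSeries σ R →ₐ[R] MvPowerSeries σ R)
    (hα : @Continuous _ _ (mvPiTopology σ R) (mvPiTopology σ R) α)
    (h0 : ∀ i, constantCoeff (α (X i)) = 0) : ⇑α = subst fun i => α (X i) := by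
  let _ : UniformSpace R := ⊥
  have _ : DiscreteUniformity R := ⟨rfl⟩
  rw [mvPiTopology_eq] at hα
  rw [← coe_substAlgHom (hasSubst_of_constantCoeff_zero h0), substAlgHom_eq_aeval]
  exact congrArg DFunLike.coe (aeval_unique (ε := α) hα).symm

end Topology

theorem gAc_substAlgEquiv {R : Type*} [CommRing R] {n : ℕ} {u : Rˣ}
    {a : Fin n → MvPowerSeries (Fin n) R} (ha : HasScalarLinearPart (u : R) a) :
    GAc (substAlgEquiv ha) := by
  have hsubst := hasSubst_of_constantCoeff_zero ha.constantCoeff_eq_zero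
  rw [GAc, coe_substAlgEquiv]
  exact ⟨continuous_subst_mvPiTopology hsubst, fun i => by
    rw [subst_X hsubst, ha.constantCoeff_eq_zero]⟩

theorem GIc.hasScalarLinearPart {R : Type*} [CommRing R] {n : ℕ}
    {α : MvPowerSeries (Fin n) R ≃ₐ[R] MvPowerSeries (Fin n) R} (hα : GIc α) :
    HasScalarLinearPart 1 fun i => α (X i) := fun i => by
  simpa using two_le_order_of_mem_augIdeal_sq (hα.2 i)

section CommutatorEquation

variable {σ R : Type*} [CommRing R]

/-- With `α = subst A`, `β = subst (b • P)` and `γ = subst (c • Q)`, `commLHS` and `commRHS` are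
`(α ∘ γ ∘ β)(Xᵢ)` and `(β ∘ γ)(Xᵢ)`. -/
noncomputable def commLHS (A : σ → MvPowerSeries σ R) (b c : R) (P Q : σ → MvPowerSeries σ R)
    (i : σ) : MvPowerSeries σ R :=
  subst A (subst (c • Q) (b • P i))

noncomputable def commRHS (b c : R) (P Q : σ → MvPowerSeries σ R) (i : σ) : MvPowerSeries σ R :=
  subst (b • P) (c • Q i)

noncomputable def commDefect (A : σ → MvPowerSeries σ R) (b c : R) (P Q : σ → MvPowerSeries σ R)
    (i : σ) : MvPowerSeries σ R :=
  commRHS b c P Q i - commLHS A b c P Q i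

theorem commDefect_sub_commDefect (A : σ → MvPowerSeries σ R) (b c : R)
    (P Q P' Q' : σ → MvPowerSeries σ R) (i : σ) :
    commDefect A b c P' Q' i - commDefect A b c P Q i =
      (commRHS b c P' Q' i - commRHS b c P Q i) - (commLHS A b c P' Q' i - commLHS A b c P Q i) := by
  unfold commDefect
  ring

/-- The correction is chosen so that, by `coeff_commLHS_sub` and `coeff_commRHS_sub`, it cancels
the degree-`m` part of the defect when `x (b^(m-1) - 1) + y (c^(m-1) - 1) = 1`. -/
noncomputable def commStep (A : σ → MvPowerSeries σ R) (b c : Rˣ) (m : ℕ) (x y : R)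
    (PQ : (σ → MvPowerSeries σ R) × (σ → MvPowerSeries σ R)) :
    (σ → MvPowerSeries σ R) × (σ → MvPowerSeries σ R) :=
  let D := fun i => homogeneousComponent m (commDefect A b c PQ.1 PQ.2 i)
  (PQ.1 + (y * ↑(b * c)⁻¹) • D, PQ.2 - (x * ↑(b * c)⁻¹) • D)

noncomputable def commApprox (A : σ → MvPowerSeries σ R) (b c : Rˣ) (x y : ℕ → R) :
    ℕ → (σ → MvPowerSeries σ R) × (σ → MvPowerSeries σ R)
  | 0 => (X, X)
  | k + 1 => commStep A b c (k + 2) (x k) (y k) (commApprox A b c x y k)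

variable [Finite σ] {A P Q P' Q' : σ → MvPowerSeries σ R}

theorem le_order_commLHS_sub {b c : R} (hA : ∀ i, constantCoeff (A i) = 0)
    (hQ : ∀ i, constantCoeff (Q i) = 0) (hQ' : ∀ i, constantCoeff (Q' i) = 0) {k : ℕ}
    (hPP : ∀ i, ↑k ≤ (P' i - P i).order) (hQQ : ∀ i, ↑k ≤ (Q' i - Q i).order) (i : σ) :
    ↑k ≤ (commLHS A b c P' Q' i - commLHS A b c P Q i).order :=
  le_order_subst_sub_subst hA hA (by simp) <| le_order_subst_sub_subst
    (fun j => by simp [hQ j]) (fun j => by simp [hQ' j])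
    (fun j => le_order_smul_sub_smul (hQQ j) c) (le_order_smul_sub_smul (hPP i) b)

theorem le_order_commRHS_sub {b c : R} (hP : ∀ i, constantCoeff (P i) = 0)
    (hP' : ∀ i, constantCoeff (P' i) = 0) {k : ℕ}
    (hPP : ∀ i, ↑k ≤ (P' i - P i).order) (hQQ : ∀ i, ↑k ≤ (Q' i - Q i).order) (i : σ) :
    ↑k ≤ (commRHS b c P' Q' i - commRHS b c P Q i).order :=
  le_order_subst_sub_subst (fun j => by simp [hP j]) (fun j => by simp [hP' j])
    (fun j => le_order_smul_sub_smul (hPP j) b) (le_order_smul_sub_smul (hQQ i) c)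

theorem coeff_commLHS_sub {b c : R} (hA : HasScalarLinearPart 1 A) (hP : HasScalarLinearPart 1 P)
    (hQ : HasScalarLinearPart 1 Q) {m : ℕ} (hm : 2 ≤ m) (hPP : ∀ i, ↑m ≤ (P' i - P i).order)
    (hQQ : ∀ i, ↑m ≤ (Q' i - Q i).order) {e : σ →₀ ℕ} (he : e.degree = m) (i : σ) :
    coeff e (commLHS A b c P' Q' i - commLHS A b c P Q i) =
      b * c * coeff e (Q' i - Q i) + b * c ^ m * coeff e (P' i - P i) := by
  have hQ' : HasScalarLinearPart 1 Q' :=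
    hQ.of_le_order_sub fun j => le_trans (by exact_mod_cast hm) (hQQ j)
  have hQQc (j : σ) := le_order_smul_sub_smul (hQQ j) c
  have hPPb := le_order_smul_sub_smul (hPP i) b
  have hinner : ↑m ≤ (subst (c • Q') (b • P' i) - subst (c • Q) (b • P i)).order :=
    le_order_subst_sub_subst (hQ.smul c).constantCoeff_eq_zero (hQ'.smul c).constantCoeff_eq_zero
      hQQc hPPb
  rw [commLHS, commLHS, ← subst_sub (hasSubst_of_constantCoeff_zero hA.constantCoeff_eq_zero),
    hA.coeff_subst hinner he, one_pow, one_mul,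
    (hQ.smul c).coeff_subst_sub_subst (a' := c • Q') (w := b) (by simpa using (hP.smul b) i) hm
      hQQc hPPb he]
  simp only [Pi.smul_apply, ← smul_sub, map_smul, smul_eq_mul]
  ring

theorem coeff_commRHS_sub {b c : R} (hP : HasScalarLinearPart 1 P) (hQ : HasScalarLinearPart 1 Q)
    {m : ℕ} (hm : 2 ≤ m) (hPP : ∀ i, ↑m ≤ (P' i - P i).order)
    (hQQ : ∀ i, ↑m ≤ (Q' i - Q i).order) {e : σ →₀ ℕ} (he : e.degree = m) (i : σ) :
    coeff e (commRHS b c P' Q' i - commRHS b c P Q i) =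
      c * b * coeff e (P' i - P i) + c * b ^ m * coeff e (Q' i - Q i) := by
  rw [commRHS, commRHS, (hP.smul b).coeff_subst_sub_subst (a' := b • P') (w := c)
    (by simpa using (hQ.smul c) i) hm (fun j => le_order_smul_sub_smul (hPP j) b)
    (le_order_smul_sub_smul (hQQ i) c) he]
  simp only [Pi.smul_apply, ← smul_sub, map_smul, smul_eq_mul]
  ring

theorem commStep_spec {b c : Rˣ} (hA : HasScalarLinearPart 1 A) (hP : HasScalarLinearPart 1 P)
    (hQ : HasScalarLinearPart 1 Q) {m : ℕ} (hm : 2 ≤ m) {x y : R}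
    (hxy : x * ((b : R) ^ (m - 1) - 1) + y * ((c : R) ^ (m - 1) - 1) = 1)
    (hdef : ∀ i, ↑m ≤ (commDefect A b c P Q i).order) :
    let PQ' := commStep A b c m x y (P, Q)
    (∀ i, ↑m ≤ (PQ'.1 i - P i).order) ∧ (∀ i, ↑m ≤ (PQ'.2 i - Q i).order) ∧
      ∀ i, ↑(m + 1) ≤ (commDefect A b c PQ'.1 PQ'.2 i).order := by
  intro PQ'
  set D := fun i => homogeneousComponent m (commDefect A b c P Q i)
  have hP' (i : σ) : PQ'.1 i - P i = (y * ↑(b * c)⁻¹) • D i := by simp [PQ', commStep, D]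
  have hQ' (i : σ) : PQ'.2 i - Q i = -((x * ↑(b * c)⁻¹) • D i) := by simp [PQ', commStep, D]
  have hD (i : σ) (r : R) : ↑m ≤ (r • D i).order :=
    (le_order_homogeneousComponent m _).trans le_order_smul
  have hPP (i : σ) : ↑m ≤ (PQ'.1 i - P i).order := by rw [hP']; exact hD i _
  have hQQ (i : σ) : ↑m ≤ (PQ'.2 i - Q i).order := by rw [hQ', order_neg]; exact hD i _
  have hPlin : HasScalarLinearPart 1 PQ'.1 :=
    hP.of_le_order_sub fun i => le_trans (by exact_mod_cast hm) (hPP i)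
  have hQlin : HasScalarLinearPart 1 PQ'.2 :=
    hQ.of_le_order_sub fun i => le_trans (by exact_mod_cast hm) (hQQ i)
  refine ⟨hPP, hQQ, fun i => le_order fun e he => ?_⟩
  rw [← sub_add_cancel (commDefect A b c PQ'.1 PQ'.2 i) (commDefect A b c P Q i),
    commDefect_sub_commDefect, map_add]
  rcases (Nat.lt_succ_iff.mp (Nat.cast_lt.mp he)).lt_or_eq with hlt | heq
  · have hlt' : (e.degree : ℕ∞) < m := Nat.cast_lt.mpr hlt
    rw [coeff_of_lt_order (hlt'.trans_le (le_order_sub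
      (le_order_commRHS_sub hP.constantCoeff_eq_zero hPlin.constantCoeff_eq_zero hPP hQQ i)
      (le_order_commLHS_sub hA.constantCoeff_eq_zero hQ.constantCoeff_eq_zero
        hQlin.constantCoeff_eq_zero hPP hQQ i))),
      coeff_of_lt_order (hlt'.trans_le (hdef i)), zero_add]
  · rw [map_sub, coeff_commRHS_sub hP hQ hm hPP hQQ heq, coeff_commLHS_sub hA hP hQ hm hPP hQQ heq,
      hP', hQ']
    simp only [D, map_neg, map_smul, coeff_homogeneousComponent, if_pos heq, smul_eq_mul]
    obtain ⟨k, rfl⟩ : ∃ k, m = k + 1 := ⟨m - 1, by omega⟩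
    rw [Nat.add_sub_cancel] at hxy
    have hinv : (↑(b * c)⁻¹ : R) * ↑(b * c) = 1 := Units.inv_mul _
    push_cast at hinv
    linear_combination (-(b * c * ↑(b * c)⁻¹ * coeff e (commDefect A b c P Q i))) * hxy
      - coeff e (commDefect A b c P Q i) * hinv

theorem commDefect_X_X (hA : ∀ i, constantCoeff (A i) = 0) (b c : R) (i : σ) :
    commDefect A b c X X i = -((b * c) • (A i - (1 : R) • X i)) := by
  have hsubst (r : R) : HasSubst (r • X : σ → MvPowerSeries σ R) :=
    hasSubst_of_constantCoeff_zero (hasScalarLinearPart_X.smul r).constantCoeff_eq_zero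
  have hsubstA := hasSubst_of_constantCoeff_zero hA
  rw [commDefect, commRHS, commLHS, subst_smul (hsubst b), subst_smul (hsubst c),
    subst_smul hsubstA, subst_X (hsubst b), subst_X (hsubst c), Pi.smul_apply, Pi.smul_apply,
    subst_smul hsubstA, subst_X hsubstA]
  simp only [smul_sub, smul_smul, one_smul, neg_sub, mul_comm c b]

theorem commApprox_spec {b c : Rˣ} {x y : ℕ → R} (hA : HasScalarLinearPart 1 A)
    (hxy : ∀ k, x k * ((b : R) ^ (k + 1) - 1) + y k * ((c : R) ^ (k + 1) - 1) = 1) (k : ℕ) :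
    HasScalarLinearPart 1 (commApprox A b c x y k).1 ∧
      HasScalarLinearPart 1 (commApprox A b c x y k).2 ∧
      ∀ i, ↑(k + 2) ≤
        (commDefect A b c (commApprox A b c x y k).1 (commApprox A b c x y k).2 i).order := by
  induction k with
  | zero =>
    refine ⟨hasScalarLinearPart_X, hasScalarLinearPart_X, fun i => ?_⟩
    rw [commApprox, commDefect_X_X hA.constantCoeff_eq_zero, order_neg]
    exact (hA i).trans le_order_smul
  | succ k ih =>
    obtain ⟨hP, hQ, hdef⟩ := ih
    obtain ⟨hPP, hQQ, hdef'⟩ := commStep_spec hA hP hQ (by omega) (hxy k) hdef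
    exact ⟨hP.of_le_order_sub fun i => le_trans (by norm_num) (hPP i),
      hQ.of_le_order_sub fun i => le_trans (by norm_num) (hQQ i), hdef'⟩

theorem commApprox_succ_sub {b c : Rˣ} {x y : ℕ → R} (hA : HasScalarLinearPart 1 A)
    (hxy : ∀ k, x k * ((b : R) ^ (k + 1) - 1) + y k * ((c : R) ^ (k + 1) - 1) = 1) (k : ℕ) :
    (∀ i, ↑(k + 2) ≤ ((commApprox A b c x y (k + 1)).1 i - (commApprox A b c x y k).1 i).order) ∧
      ∀ i, ↑(k + 2) ≤ ((commApprox A b c x y (k + 1)).2 i - (commApprox A b c x y k).2 i).order := by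
  obtain ⟨hP, hQ, hdef⟩ := commApprox_spec hA hxy k
  obtain ⟨hPP, hQQ, -⟩ := commStep_spec hA hP hQ (by omega) (hxy k) hdef
  exact ⟨hPP, hQQ⟩

theorem exists_commLHS_eq_commRHS (hA : HasScalarLinearPart 1 A) (b c : Rˣ)
    (hbc : ∀ m : ℕ, 0 < m → Ideal.span {(b : R) ^ m - 1, (c : R) ^ m - 1} = ⊤) :
    ∃ P Q : σ → MvPowerSeries σ R, HasScalarLinearPart 1 P ∧ HasScalarLinearPart 1 Q ∧
      ∀ i, commLHS A b c P Q i = commRHS (b : R) c P Q i := by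
  have hbez (k : ℕ) : ∃ x y : R, x * ((b : R) ^ (k + 1) - 1) + y * ((c : R) ^ (k + 1) - 1) = 1 :=
    Ideal.mem_span_pair.mp ((Ideal.eq_top_iff_one _).mp (hbc (k + 1) k.succ_pos))
  choose x y hxy using hbez
  set approx := commApprox A b c x y
  have hlim {f : ℕ → MvPowerSeries σ R} (hf : ∀ k, ↑(k + 2) ≤ (f (k + 1) - f k).order) :
      ∃ g, ∀ k, ↑k ≤ (g - f k).order :=
    exists_le_order_sub_of_le_order_succ_sub f fun k => le_trans (by norm_cast; omega) (hf k)
  choose P hP using fun i =>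
    hlim (f := fun k => (approx k).1 i) fun k => (commApprox_succ_sub hA hxy k).1 i
  choose Q hQ using fun i =>
    hlim (f := fun k => (approx k).2 i) fun k => (commApprox_succ_sub hA hxy k).2 i
  obtain ⟨hP2, hQ2, -⟩ := commApprox_spec hA hxy 2
  have hPlin : HasScalarLinearPart 1 P := hP2.of_le_order_sub fun i => hP i 2
  have hQlin : HasScalarLinearPart 1 Q := hQ2.of_le_order_sub fun i => hQ i 2
  refine ⟨P, Q, hPlin, hQlin, fun i => (eq_of_forall_le_order_sub fun k => ?_).symm⟩
  obtain ⟨hPk, hQk, hdefk⟩ := commApprox_spec hA hxy k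
  change ↑k ≤ (commDefect A b c P Q i).order
  rw [← sub_add_cancel (commDefect A b c P Q i) (commDefect A b c (approx k).1 (approx k).2 i),
    commDefect_sub_commDefect]
  refine le_order_add (le_order_sub ?_ ?_) ((hdefk i).trans' (by norm_cast; omega))
  · exact le_order_commRHS_sub hPk.constantCoeff_eq_zero hPlin.constantCoeff_eq_zero
      (fun j => hP j k) (fun j => hQ j k) i
  · exact le_order_commLHS_sub hA.constantCoeff_eq_zero hQk.constantCoeff_eq_zero
      hQlin.constantCoeff_eq_zero (fun j => hP j k) (fun j => hQ j k) i

theorem subst_comp_eq_of_commLHS_eq_commRHS {b c : R} (hA : ∀ i, constantCoeff (A i) = 0)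
    (hP : ∀ i, constantCoeff ((b • P) i) = 0) (hQ : ∀ i, constantCoeff ((c • Q) i) = 0)
    (h : ∀ i, commLHS A b c P Q i = commRHS b c P Q i) (f : MvPowerSeries σ R) :
    subst A (subst (c • Q) (subst (b • P) f)) = subst (b • P) (subst (c • Q) f) := by
  have hsP := hasSubst_of_constantCoeff_zero hP
  have hsQ := hasSubst_of_constantCoeff_zero hQ
  have hsQP : HasSubst fun i => subst (c • Q) ((b • P) i) :=
    hasSubst_of_constantCoeff_zero fun i => constantCoeff_subst_eq_zero hsQ hQ (hP i)
  rw [subst_comp_subst_apply hsP hsQ, subst_comp_subst_apply hsQ hsP,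
    subst_comp_subst_apply hsQP (hasSubst_of_constantCoeff_zero hA)]
  exact congrArg (subst · f) (funext h)

end CommutatorEquation

end MvPowerSeries

theorem every_GIc_is_commutator_general {R : Type*} [CommRing R] {n : ℕ}
    (b c : Rˣ)
    (hbc : ∀ m : ℕ, 0 < m → Ideal.span {(b : R) ^ m - 1, (c : R) ^ m - 1} = ⊤)
    (α : MvPowerSeries (Fin n) R ≃ₐ[R] MvPowerSeries (Fin n) R) (hα : GIc α) :
    ∃ β γ : MvPowerSeries (Fin n) R ≃ₐ[R] MvPowerSeries (Fin n) R,
      GAc β ∧ GAc γ ∧ α = β * γ * β⁻¹ * γ⁻¹ := by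
  have hA := hα.hasScalarLinearPart
  obtain ⟨P, Q, hP, hQ, hPQ⟩ := exists_commLHS_eq_commRHS hA b c hbc
  have hβ : HasScalarLinearPart (b : R) ((b : R) • P) := by simpa using hP.smul (b : R)
  have hγ : HasScalarLinearPart (c : R) ((c : R) • Q) := by simpa using hQ.smul (c : R)
  refine ⟨substAlgEquiv hβ, substAlgEquiv hγ, gAc_substAlgEquiv hβ, gAc_substAlgEquiv hγ, ?_⟩
  have hαA (f : MvPowerSeries (Fin n) R) : α f = subst (fun i => α (X i)) f :=
    congrFun (eq_subst_of_continuous α.toAlgHom hα.1.1 hα.1.2) f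
  have hcomm : α * substAlgEquiv hγ * substAlgEquiv hβ = substAlgEquiv hβ * substAlgEquiv hγ := by
    refine AlgEquiv.ext fun f => ?_
    simp only [AlgEquiv.mul_apply, coe_substAlgEquiv]
    rw [hαA]
    exact subst_comp_eq_of_commLHS_eq_commRHS hA.constantCoeff_eq_zero hβ.constantCoeff_eq_zero
      hγ.constantCoeff_eq_zero hPQ f
  rw [← hcomm]
  group

/-- Theorem `Main`: if there are units `b, c ∈ R` such that
`(bᵐ - 1)R + (cᵐ - 1)R = R` for every positive integer `m`, then every `α ∈ GI^c_n(R)` is a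
single commutator of elements of `GA^c_n(R)`. -/
theorem every_GIc_is_commutator {R : Type*} [CommRing R] {n : ℕ} (hn : 0 < n)
    (b c : Rˣ)
    (hbc : ∀ m : ℕ, 0 < m → Ideal.span {(b : R) ^ m - 1, (c : R) ^ m - 1} = ⊤)
    (α : MvPowerSeries (Fin n) R ≃ₐ[R] MvPowerSeries (Fin n) R) (hα : GIc α) :
    ∃ β γ : MvPowerSeries (Fin n) R ≃ₐ[R] MvPowerSeries (Fin n) R,
      GAc β ∧ GAc γ ∧ α = β * γ * β⁻¹ * γ⁻¹ :=
  every_GIc_is_commutator_general b c hbc α hα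
end

section
/- Let R be a commutative ring, n a positive integer, and m ≥ 2. For a continuous augmented R-algebra endomorphism β of R[[X₁,...,Xₙ]], let β₁ denote the continuous augmented endomorphism sending each Xᵢ to the degree-1 homogeneous component of β(Xᵢ). Let β, β′, γ, γ′ be continuous augmented R-algebra endomorphisms such that β(Xᵢ) ≡ β′(Xᵢ) mod M^m and γ(Xᵢ) ≡ γ′(Xᵢ) mod M^m for all i (all homogeneous components of degree < m agree; in particular β₁ = β′₁ and γ₁ = γ′₁). Then for every i, the degree-m homogeneous components of γ(β(Xᵢ)) − γ₁(β(Xᵢ)) − γ(β₁(Xᵢ)) and of γ′(β′(Xᵢ)) − γ′₁(β′(Xᵢ)) − γ′(β′₁(Xᵢ)) coincide; i.e. this expression's degree-m part does not depend on the degree-m homogeneous components of the β(Xⱼ) and γ(Xⱼ). -/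
/-!
An augmented endomorphism maps `M^k` into `M^k`, and (in finitely many variables) `M^k` consists
exactly of the series of order at least `k`. Hence two augmented endomorphisms agreeing modulo
`M^(t+1)` on the variables agree modulo `M^(k+t)` on `M^k`, and agree outright if they agree on the
variables; so `γ₁ = γ₁'` and `β₁ Xᵢ = β₁' Xᵢ`. With `u = β Xᵢ - β₁ Xᵢ` and `u' = β' Xᵢ - β₁ Xᵢ`,
both in `M²`, the difference of the two expressions is `(γ - γ₁)(u - u') + (γ - γ')(u')`, and
both terms lie in `M^(m+1)`.
-/

open MvPowerSeries

/-- A continuous augmented `R`-algebra endomorphism of `R[[X₁,…,Xₙ]]`: continuous for the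
topology of coefficientwise convergence and mapping `M` into `M` (each variable goes to a
series with zero constant coefficient). -/
noncomputable def ContAug {R : Type*} [CommRing R] {n : ℕ}
    (φ : MvPowerSeries (Fin n) R →ₐ[R] MvPowerSeries (Fin n) R) : Prop :=
  @Continuous _ _ (mvPiTopology (Fin n) R) (mvPiTopology (Fin n) R) φ ∧
    ∀ i, constantCoeff (φ (X i)) = 0

section

open Finsupp

variable {σ R : Type*} [CommRing R]

theorem Finsupp.exists_eq_single_of_degree_eq_one {d : σ →₀ ℕ} (hd : degree d = 1) :
    ∃ j, d = single j 1 := by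
  obtain ⟨j, hj⟩ := support_nonempty_iff.mpr (show d ≠ 0 by rintro rfl; simp at hd)
  have hle : single j 1 ≤ d := single_le_iff.mpr (Nat.pos_of_ne_zero (mem_support_iff.mp hj))
  have hrest : degree (d - single j 1) = 0 := by
    have := congrArg degree (tsub_add_cancel_of_le hle)
    rw [map_add, degree_single, hd] at this
    omega
  exact ⟨j, le_antisymm (tsub_eq_zero_iff_le.mp ((degree_eq_zero_iff _).mp hrest)) hle⟩

open Classical in
/-- Collects the monomials of `f` whose least variable is `X j`, divided by `X j`, so that
`f = ∑ j, X j * divX f j` when `f` has no constant term. -/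
noncomputable def divX [LinearOrder σ] (f : MvPowerSeries σ R) (j : σ) : MvPowerSeries σ R :=
  fun e => if ∀ i < j, e i = 0 then coeff (e + single j 1) f else 0

open Classical in
theorem coeff_divX [LinearOrder σ] (f : MvPowerSeries σ R) (j : σ) (e : σ →₀ ℕ) :
    coeff e (divX f j) = if ∀ i < j, e i = 0 then coeff (e + single j 1) f else 0 := by
  rw [coeff_apply]
  rfl

open Classical in
theorem coeff_X_mul_divX [LinearOrder σ] (f : MvPowerSeries σ R) (j : σ) (d : σ →₀ ℕ) :
    coeff d (X j * divX f j) = if 0 < d j ∧ ∀ i < j, d i = 0 then coeff d f else 0 := by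
  rw [X_def, coeff_monomial_mul, coeff_divX, one_mul]
  by_cases hj : 0 < d j
  · have hle : single j 1 ≤ d := single_le_iff.mpr hj
    have hsub : ∀ i < j, (d - single j 1 : σ →₀ ℕ) i = d i := fun i hi => by
      simp [hi.ne]
    simp only [hle, hj, true_and, if_true, tsub_add_cancel_of_le hle]
    exact if_congr (forall₂_congr fun i hi => by rw [hsub i hi]) rfl rfl
  · have hle : ¬ single j 1 ≤ d := fun h => hj (single_le_iff.mp h)
    simp [hle, hj]

theorem sum_X_mul_divX [LinearOrder σ] [Fintype σ] {f : MvPowerSeries σ R}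
    (hf : constantCoeff f = 0) : ∑ j, X j * divX f j = f := by
  ext d
  simp only [map_sum, coeff_X_mul_divX]
  rcases eq_or_ne d 0 with rfl | hd
  · simp [hf]
  obtain ⟨j₀, hj₀, hmin⟩ : ∃ j₀, 0 < d j₀ ∧ ∀ i < j₀, d i = 0 := by
    have hne := support_nonempty_iff.mpr hd
    refine ⟨d.support.min' hne, Nat.pos_of_ne_zero (mem_support_iff.mp (d.support.min'_mem hne)),
      fun i hi => notMem_support_iff.mp fun hmem => (d.support.min'_le i hmem).not_gt hi⟩
  rw [Finset.sum_eq_single j₀, if_pos ⟨hj₀, hmin⟩]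
  · rintro j - hj
    refine if_neg fun ⟨hdj, hj'⟩ => hj ?_
    rcases lt_trichotomy j j₀ with h | h | h
    · exact absurd (hmin j h) hdj.ne'
    · exact h
    · exact absurd (hj' j₀ h) hj₀.ne'
  · simp

theorem exists_eq_sum_X_mul_of_le_order [Fintype σ] {f : MvPowerSeries σ R} {k : ℕ}
    (hf : ((k + 1 : ℕ) : ℕ∞) ≤ f.order) :
    ∃ g : σ → MvPowerSeries σ R, f = ∑ j, X j * g j ∧ ∀ j, (k : ℕ∞) ≤ (g j).order := by
  let : LinearOrder σ := IsWellOrder.linearOrder WellOrderingRel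
  have hf₀ : constantCoeff f = 0 :=
    one_le_order_iff_constCoeff_eq_zero.mp (le_trans (by simp) hf)
  refine ⟨divX f, (sum_X_mul_divX hf₀).symm, fun j => nat_le_order fun e he => ?_⟩
  rw [coeff_divX]
  split_ifs
  · exact coeff_of_lt_order (lt_of_lt_of_le (by simpa using he) hf)
  · rfl

theorem augIdeal_le_ker_constantCoeff :
    augIdeal σ R ≤ RingHom.ker (constantCoeff (σ := σ) (R := R)) :=
  Ideal.span_le.mpr (Set.range_subset_iff.mpr fun j => by simp)

theorem le_order_of_mem_augIdeal_pow {f : MvPowerSeries σ R} {k : ℕ}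
    (hf : f ∈ augIdeal σ R ^ k) : (k : ℕ∞) ≤ f.order := by
  induction k generalizing f with
  | zero => simp
  | succ k ih =>
    rw [pow_succ] at hf
    refine Submodule.mul_induction_on hf (fun x hx y hy => ?_) (fun x y hx hy => ?_)
    · have hy' : 1 ≤ y.order :=
        one_le_order_iff_constCoeff_eq_zero.mpr (augIdeal_le_ker_constantCoeff hy)
      calc ((k + 1 : ℕ) : ℕ∞) = k + 1 := by push_cast; rfl
        _ ≤ x.order + y.order := add_le_add (ih hx) hy'
        _ ≤ (x * y).order := le_order_mul
    · exact le_trans (le_min hx hy) min_order_le_add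

theorem mem_augIdeal_pow_of_le_order [Fintype σ] {f : MvPowerSeries σ R} {k : ℕ}
    (hf : (k : ℕ∞) ≤ f.order) : f ∈ augIdeal σ R ^ k := by
  induction k generalizing f with
  | zero => simp
  | succ k ih =>
    obtain ⟨g, rfl, hg⟩ := exists_eq_sum_X_mul_of_le_order hf
    rw [pow_succ']
    exact Ideal.sum_mem _ fun j _ => Ideal.mul_mem_mul (Ideal.subset_span ⟨j, rfl⟩) (ih (hg j))

theorem mem_augIdeal_pow_iff [Fintype σ] {f : MvPowerSeries σ R} {k : ℕ} :
    f ∈ augIdeal σ R ^ k ↔ (k : ℕ∞) ≤ f.order :=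
  ⟨le_order_of_mem_augIdeal_pow, mem_augIdeal_pow_of_le_order⟩

theorem mem_augIdeal_iff [Fintype σ] {f : MvPowerSeries σ R} :
    f ∈ augIdeal σ R ↔ constantCoeff f = 0 := by
  rw [← pow_one (augIdeal σ R), mem_augIdeal_pow_iff, Nat.cast_one,
    one_le_order_iff_constCoeff_eq_zero]

section Endomorphisms

variable [Fintype σ] {φ ψ : MvPowerSeries σ R →ₐ[R] MvPowerSeries σ R}

theorem map_mem_augIdeal_pow (hφ : ∀ j, constantCoeff (φ (X j)) = 0) {f : MvPowerSeries σ R}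
    {k : ℕ} (hf : f ∈ augIdeal σ R ^ k) : φ f ∈ augIdeal σ R ^ k := by
  have hM : (augIdeal σ R).map φ ≤ augIdeal σ R := by
    rw [augIdeal, Ideal.map_span, Ideal.span_le]
    rintro _ ⟨_, ⟨j, rfl⟩, rfl⟩
    exact mem_augIdeal_iff.mpr (hφ j)
  exact Ideal.pow_right_mono hM k (Ideal.map_pow φ _ k ▸ Ideal.mem_map_of_mem φ hf)

/-- Writing `f = C a + ∑ c j * X j` gives
`φ f - ψ f = ∑ ((φ - ψ) (c j) * φ (X j) + ψ (c j) * (φ - ψ) (X j))`, so each induction step on the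
exponent gains a factor of `M`. -/
theorem map_sub_map_mem_augIdeal_pow (hφ : ∀ j, constantCoeff (φ (X j)) = 0) {t : ℕ}
    (h : ∀ j, φ (X j) - ψ (X j) ∈ augIdeal σ R ^ t) (f : MvPowerSeries σ R) :
    φ f - ψ f ∈ augIdeal σ R ^ t := by
  suffices ∀ s ≤ t, ∀ f, φ f - ψ f ∈ augIdeal σ R ^ s from this t le_rfl f
  intro s
  induction s with
  | zero => simp
  | succ s ih =>
    intro hst f
    obtain ⟨c, hc⟩ := Ideal.mem_span_range_iff_exists_fun.mp
      (mem_augIdeal_iff.mpr (by simp : constantCoeff (f - C (constantCoeff f)) = 0))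
    have hC : ∀ a : R, φ (C a) = ψ (C a) := fun a => by
      rw [c_eq_algebraMap, φ.commutes, ψ.commutes]
    have hf : φ f - ψ f =
        ∑ j, ((φ (c j) - ψ (c j)) * φ (X j) + ψ (c j) * (φ (X j) - ψ (X j))) := by
      rw [← sub_add_cancel f (C (constantCoeff f)), ← hc]
      simp only [map_add, map_sum, map_mul, hC, add_sub_add_right_eq_sub,
        ← Finset.sum_sub_distrib]
      exact Finset.sum_congr rfl fun j _ => by ring
    rw [hf, pow_succ]
    refine Ideal.sum_mem _ fun j _ => Ideal.add_mem _ ?_ ?_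
    · exact Ideal.mul_mem_mul (ih (by omega) _) (mem_augIdeal_iff.mpr (hφ j))
    · exact Ideal.mul_mem_left _ _ (Ideal.pow_le_pow_right hst (h j))

theorem map_sub_map_mem_augIdeal_pow_add (hφ : ∀ j, constantCoeff (φ (X j)) = 0)
    (hψ : ∀ j, constantCoeff (ψ (X j)) = 0) {t : ℕ}
    (h : ∀ j, φ (X j) - ψ (X j) ∈ augIdeal σ R ^ (t + 1)) {f : MvPowerSeries σ R} {k : ℕ}
    (hf : f ∈ augIdeal σ R ^ k) : φ f - ψ f ∈ augIdeal σ R ^ (k + t) := by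
  induction k generalizing f with
  | zero =>
    rw [zero_add]
    exact Ideal.pow_le_pow_right (by omega) (map_sub_map_mem_augIdeal_pow hφ h f)
  | succ k ih =>
    rw [pow_succ] at hf
    refine Submodule.mul_induction_on hf (fun x hx y hy => ?_) (fun x y hx hy => ?_)
    · have hxy : φ (x * y) - ψ (x * y) = (φ x - ψ x) * φ y + ψ x * (φ y - ψ y) := by
        simp only [map_mul]; ring
      rw [hxy]
      refine Ideal.add_mem _ ?_ ?_
      · rw [show k + 1 + t = k + t + 1 by omega, pow_succ]
        exact Ideal.mul_mem_mul (ih hx)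
          (by simpa using map_mem_augIdeal_pow hφ (k := 1) (by simpa using hy))
      · rw [show k + 1 + t = k + (t + 1) by omega, pow_add]
        exact Ideal.mul_mem_mul (map_mem_augIdeal_pow hψ hx)
          (map_sub_map_mem_augIdeal_pow hφ h y)
    · rw [map_add, map_add, add_sub_add_comm]
      exact Ideal.add_mem _ hx hy

theorem eq_of_map_X_eq (hψ : ∀ j, constantCoeff (ψ (X j)) = 0) (h : ∀ j, φ (X j) = ψ (X j)) :
    φ = ψ := by
  ext f : 1
  refine sub_eq_zero.mp (ext fun d => ?_)
  have hmem := map_sub_map_mem_augIdeal_pow hψ (t := degree d + 1)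
    (fun j => by rw [h j, sub_self]; exact zero_mem _) f
  rw [map_zero, ← neg_sub, map_neg, coeff_of_lt_order, neg_zero]
  exact lt_of_lt_of_le (by exact_mod_cast Nat.lt_succ_self _) (le_order_of_mem_augIdeal_pow hmem)

end Endomorphisms

theorem coeff_eq_of_sub_mem_augIdeal_pow {f g : MvPowerSeries σ R} {k : ℕ}
    (h : f - g ∈ augIdeal σ R ^ k) {d : σ →₀ ℕ} (hd : degree d < k) : coeff d f = coeff d g :=
  sub_eq_zero.mp <| map_sub (coeff d) f g ▸
    coeff_of_lt_order (lt_of_lt_of_le (by exact_mod_cast hd) (le_order_of_mem_augIdeal_pow h))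

theorem homogeneousComponent_one_eq [Fintype σ] (f : MvPowerSeries σ R) :
    homogeneousComponent 1 f = ∑ j, coeff (single j 1) f • X j := by
  classical
  ext d
  simp only [coeff_homogeneousComponent, map_sum, map_smul, coeff_X, smul_eq_mul, mul_ite, mul_one,
    mul_zero]
  split_ifs with hd
  · obtain ⟨j₀, rfl⟩ := exists_eq_single_of_degree_eq_one hd
    refine (Finset.sum_eq_single j₀ (fun j _ hj => if_neg fun h => ?_) (by simp)).trans ?_ |>.symm
    · exact hj ((single_left_inj one_ne_zero).mp h).symm
    · rw [if_pos rfl]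
  · refine (Finset.sum_eq_zero fun j _ => if_neg ?_).symm
    rintro rfl
    exact hd (degree_single j 1)

theorem sub_homogeneousComponent_one_mem_augIdeal_sq [Fintype σ] {f : MvPowerSeries σ R}
    (hf : constantCoeff f = 0) : f - homogeneousComponent 1 f ∈ augIdeal σ R ^ 2 := by
  refine mem_augIdeal_pow_of_le_order (nat_le_order fun d hd => ?_)
  rw [map_sub, coeff_homogeneousComponent]
  split_ifs with h1
  · exact sub_self _
  · obtain rfl : d = 0 := (degree_eq_zero_iff d).mp (by omega)
    simpa using hf

theorem homogeneousComponent_one_eq_of_sub_mem_augIdeal_pow {f g : MvPowerSeries σ R} {m : ℕ}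
    (hm : 2 ≤ m) (h : f - g ∈ augIdeal σ R ^ m) :
    homogeneousComponent 1 f = homogeneousComponent 1 g := by
  ext d
  simp only [coeff_homogeneousComponent]
  split_ifs with hd
  · exact coeff_eq_of_sub_mem_augIdeal_pow h (by omega)
  · rfl

end

theorem comp_sub_linear_parts_congr_general {R : Type*} [CommRing R] {n : ℕ}
    (m : ℕ) (hm : 2 ≤ m)
    (β β' γ γ' β₁ γ₁ β₁' γ₁' : MvPowerSeries (Fin n) R →ₐ[R] MvPowerSeries (Fin n) R)
    (hβ : ContAug β) (hγ : ContAug γ) (hγ' : ContAug γ')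
    (hγ₁ : ContAug γ₁)
    (hββ' : ∀ i, β (X i) - β' (X i) ∈ (augIdeal (Fin n) R) ^ m)
    (hγγ' : ∀ i, γ (X i) - γ' (X i) ∈ (augIdeal (Fin n) R) ^ m)
    (hβ₁X : ∀ i, β₁ (X i) =
      ∑ j, MvPowerSeries.coeff (Finsupp.single j 1) (β (X i)) • X j)
    (hγ₁X : ∀ i, γ₁ (X i) =
      ∑ j, MvPowerSeries.coeff (Finsupp.single j 1) (γ (X i)) • X j)
    (hβ₁'X : ∀ i, β₁' (X i) =
      ∑ j, MvPowerSeries.coeff (Finsupp.single j 1) (β' (X i)) • X j)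
    (hγ₁'X : ∀ i, γ₁' (X i) =
      ∑ j, MvPowerSeries.coeff (Finsupp.single j 1) (γ' (X i)) • X j) :
    ∀ i, ∀ d : Fin n →₀ ℕ, (d.sum fun _ e => e) = m →
      MvPowerSeries.coeff d (γ (β (X i)) - γ₁ (β (X i)) - γ (β₁ (X i))) =
        MvPowerSeries.coeff d (γ' (β' (X i)) - γ₁' (β' (X i)) - γ' (β₁' (X i))) := by
  intro i d hd
  change Finsupp.degree d = _ at hd
  simp only [← homogeneousComponent_one_eq] at hβ₁X hγ₁X hβ₁'X hγ₁'X
  obtain ⟨t, rfl⟩ : ∃ t, m = t + 1 + 1 := ⟨m - 2, by omega⟩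
  have hβ₁'_eq : β₁' (X i) = β₁ (X i) := by
    rw [hβ₁X, hβ₁'X, homogeneousComponent_one_eq_of_sub_mem_augIdeal_pow hm (hββ' i)]
  have hγ₁'_eq : γ₁' = γ₁ := eq_of_map_X_eq hγ₁.2 fun j => by
    rw [hγ₁X, hγ₁'X, homogeneousComponent_one_eq_of_sub_mem_augIdeal_pow hm (hγγ' j)]
  rw [hβ₁'_eq, hγ₁'_eq]
  have hu' : β' (X i) - β₁ (X i) ∈ augIdeal (Fin n) R ^ 2 := by
    rw [← sub_sub_sub_cancel_left _ _ (β (X i))]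
    refine Ideal.sub_mem _ ?_ (Ideal.pow_le_pow_right hm (hββ' i))
    exact hβ₁X i ▸ sub_homogeneousComponent_one_mem_augIdeal_sq (hβ.2 i)
  have hγγ₁ : ∀ j, γ (X j) - γ₁ (X j) ∈ augIdeal (Fin n) R ^ (1 + 1) := fun j =>
    hγ₁X j ▸ sub_homogeneousComponent_one_mem_augIdeal_sq (hγ.2 j)
  have h₁ := map_sub_map_mem_augIdeal_pow_add hγ.2 hγ₁.2 hγγ₁ (hββ' i)
  have h₂ := map_sub_map_mem_augIdeal_pow_add hγ.2 hγ'.2 hγγ' hu'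
  refine coeff_eq_of_sub_mem_augIdeal_pow (k := t + 1 + 1 + 1) ?_ (by rw [← hd]; omega)
  convert Ideal.add_mem _ h₁ (Ideal.pow_le_pow_right (by omega) h₂) using 1
  simp only [map_sub]
  ring

/-- Lemma `TOPterms`(b): let `m ≥ 2`, let `β, β', γ, γ'` be continuous
augmented endomorphisms agreeing on the variables modulo `M^m` (all homogeneous components
of degree `< m` agree), and let `β₁, γ₁, β₁', γ₁'` be continuous augmented endomorphisms
sending each `Xᵢ` to the degree-1 homogeneous component of `β(Xᵢ)`, `γ(Xᵢ)`, `β'(Xᵢ)`,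
`γ'(Xᵢ)` respectively. Then for every `i` the degree-`m` homogeneous components of
`γ(β(Xᵢ)) - γ₁(β(Xᵢ)) - γ(β₁(Xᵢ))` and `γ'(β'(Xᵢ)) - γ₁'(β'(Xᵢ)) - γ'(β₁'(Xᵢ))`
coincide. -/
theorem comp_sub_linear_parts_congr {R : Type*} [CommRing R] {n : ℕ} (hn : 0 < n)
    (m : ℕ) (hm : 2 ≤ m)
    (β β' γ γ' β₁ γ₁ β₁' γ₁' : MvPowerSeries (Fin n) R →ₐ[R] MvPowerSeries (Fin n) R)
    (hβ : ContAug β) (hβ' : ContAug β') (hγ : ContAug γ) (hγ' : ContAug γ')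
    (hβ₁ : ContAug β₁) (hγ₁ : ContAug γ₁) (hβ₁' : ContAug β₁') (hγ₁' : ContAug γ₁')
    (hββ' : ∀ i, β (X i) - β' (X i) ∈ (augIdeal (Fin n) R) ^ m)
    (hγγ' : ∀ i, γ (X i) - γ' (X i) ∈ (augIdeal (Fin n) R) ^ m)
    (hβ₁X : ∀ i, β₁ (X i) =
      ∑ j, MvPowerSeries.coeff (Finsupp.single j 1) (β (X i)) • X j)
    (hγ₁X : ∀ i, γ₁ (X i) =
      ∑ j, MvPowerSeries.coeff (Finsupp.single j 1) (γ (X i)) • X j)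
    (hβ₁'X : ∀ i, β₁' (X i) =
      ∑ j, MvPowerSeries.coeff (Finsupp.single j 1) (β' (X i)) • X j)
    (hγ₁'X : ∀ i, γ₁' (X i) =
      ∑ j, MvPowerSeries.coeff (Finsupp.single j 1) (γ' (X i)) • X j) :
    ∀ i, ∀ d : Fin n →₀ ℕ, (d.sum fun _ e => e) = m →
      MvPowerSeries.coeff d (γ (β (X i)) - γ₁ (β (X i)) - γ (β₁ (X i))) =
        MvPowerSeries.coeff d (γ' (β' (X i)) - γ₁' (β' (X i)) - γ' (β₁' (X i))) :=
  comp_sub_linear_parts_congr_general m hm β β' γ γ' β₁ γ₁ β₁' γ₁' hβ hγ hγ' hγ₁ hββ' hγγ' hβ₁X hγ₁X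
    hβ₁'X hγ₁'X
end

section
/- Let p ≥ 5 be a prime and R a commutative ring containing a field F of characteristic p. Let b₂, b₃, c₂, c₃ ∈ F with c₂ − b₂ ≠ 0, and set a₂ = 2(b₂ − c₂), a₃ = 4(b₂ − c₂)². Let α ∈ GA^c_1(R) satisfy α(X)_1 = 1, α(X)_2 = a₂ and α(X)_3 = a₃ (higher coefficients arbitrary). Let m ≥ 4 be an even integer with m ≢ 2 (mod p). Then for arbitrary prescribed elements b_k, c_k ∈ R for k ≥ 4 with k ≠ m, there exist b_m, c_m ∈ R such that the automorphisms β, γ ∈ GA^c_1(R) determined by β(X) = −X + b₂X² + b₃X³ + Σ_{k≥4} b_k X^k and γ(X) = −X + c₂X² + c₃X³ + Σ_{k≥4} c_k X^k satisfy β(γ(α(X)))_m = γ(β(X))_m and β(γ(α(X)))_{m+1} = γ(β(X))_{m+1}. -/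
/-- `GA^c_1(R)`: an `R`-algebra automorphism of `R[[X]]` belongs to `GA^c_1(R)` iff it is
continuous for the topology of coefficientwise convergence and `φ(X)` has zero constant
coefficient. -/
noncomputable def GAc1 {R : Type*} [CommRing R]
    (φ : PowerSeries R ≃ₐ[R] PowerSeries R) : Prop :=
  @Continuous _ _ (mvPiTopology Unit R) (mvPiTopology Unit R) φ ∧
    PowerSeries.constantCoeff (φ PowerSeries.X) = 0

/-!
Write `β(X) = B + t Xᵐ` and `γ(X) = G + u Xᵐ`, where `B`, `G` carry the prescribed coefficients
and `t = bₘ`, `u = cₘ` are the unknowns; then `(βγα)(X) = α(X) ∘ γ(X) ∘ β(X)` and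
`(γβ)(X) = β(X) ∘ γ(X)`. A perturbation `d` of order `m` of the inner series enters only to first
order below degree `2m`: `f ∘ (g + d) ≡ f ∘ g + (f' ∘ g) · d (mod X²ᵐ)`. Hence the coefficients of
degree `m` and `m + 1` of both composites are affine in `(t, u)`. Since `β(X)`, `γ(X)` have linear
coefficient `-1` and `m` is even, the two equations become `2 (t - u) = const` and, after
substituting `t = u + s`, `(m - 2)(c₂ - b₂) u = const`; both are solvable because `2` and
`(m - 2)(c₂ - b₂)` are nonzero in `F` (`p ≥ 5` and `m ≢ 2 mod p`).
-/

namespace PowerSeries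

section SubstAlgEquiv

variable {R : Type*} [CommRing R]

noncomputable def substAlgEquiv (g : R⟦X⟧) (hg : constantCoeff g = 0) (hg₁ : IsUnit (coeff 1 g)) :
    R⟦X⟧ ≃ₐ[R] R⟦X⟧ :=
  have hg' := HasSubst.of_constantCoeff_zero' hg
  have hinv := HasSubst.substInvOfIsUnit g hg₁
  AlgEquiv.ofAlgHom (substAlgHom hg') (substAlgHom hinv)
    (AlgHom.ext fun f => by
      simp [coe_substAlgHom, subst_comp_subst_apply hinv hg', subst_substInvOfIsUnit_left g hg,
        X_subst])
    (AlgHom.ext fun f => by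
      simp [coe_substAlgHom, subst_comp_subst_apply hg' hinv, subst_substInvOfIsUnit_right g hg,
        X_subst])

variable {g : R⟦X⟧} (hg : constantCoeff g = 0) (hg₁ : IsUnit (coeff 1 g))

theorem coe_substAlgEquiv : ⇑(substAlgEquiv g hg hg₁) = subst g :=
  coe_substAlgHom (HasSubst.of_constantCoeff_zero' hg)

theorem substAlgEquiv_apply (f : R⟦X⟧) : substAlgEquiv g hg hg₁ f = f.subst g :=
  congrFun (coe_substAlgEquiv hg hg₁) f

theorem substAlgEquiv_X : substAlgEquiv g hg hg₁ X = g := by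
  rw [substAlgEquiv_apply, subst_X (HasSubst.of_constantCoeff_zero' hg)]

theorem gAc1_substAlgEquiv : GAc1 (substAlgEquiv g hg hg₁) := by
  -- `mvPiTopology` is the `Pi` topology of `MvPowerSeries.WithPiTopology` for discrete `R`
  let _ : UniformSpace R := ⊥
  refine ⟨?_, by rw [substAlgEquiv_X, hg]⟩
  rw [coe_substAlgEquiv]
  exact MvPowerSeries.continuous_subst (HasSubst.of_constantCoeff_zero' hg).const

end SubstAlgEquiv

section Coefficients

open Finset

variable {R : Type*} [CommRing R] {f g d : R⟦X⟧} {m n : ℕ}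

theorem coeff_pow_eq_zero_of_lt (hg : constantCoeff g = 0) {k : ℕ} (hn : n < k) :
    coeff n (g ^ k) = 0 :=
  X_pow_dvd_iff.mp (pow_dvd_pow_of_dvd (X_dvd_iff.mpr hg) k) n hn

theorem coeff_subst_eq_sum (hg : constantCoeff g = 0) {N : ℕ} (hn : n < N) :
    coeff n (f.subst g) = ∑ k ∈ range N, coeff k f * coeff n (g ^ k) := by
  rw [coeff_subst' (HasSubst.of_constantCoeff_zero' hg)]
  refine finsum_eq_sum_of_support_subset _ fun k hk => mem_coe.mpr (mem_range.mpr ?_)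
  by_contra! hNk
  exact hk (show coeff k f • coeff n (g ^ k) = 0 by
    rw [coeff_pow_eq_zero_of_lt hg (by omega), smul_zero])

theorem coeff_subst_mul_eq_sum (hg : constantCoeff g = 0) {N : ℕ} (hn : n < N) :
    coeff n (f.subst g * d) = ∑ k ∈ range N, coeff k f * coeff n (g ^ k * d) := by
  simp only [coeff_mul, mul_sum]
  rw [sum_comm]
  refine sum_congr rfl fun ij hij => ?_
  rw [coeff_subst_eq_sum (N := N) hg (by have := mem_antidiagonal.mp hij; omega), sum_mul]
  exact sum_congr rfl fun k _ => mul_assoc _ _ _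

theorem constantCoeff_subst_of_constantCoeff_eq_zero (hg : constantCoeff g = 0) :
    constantCoeff (f.subst g) = constantCoeff f := by
  simpa using coeff_subst_eq_sum (f := f) hg zero_lt_one

theorem coeff_one_subst (hg : constantCoeff g = 0) :
    coeff 1 (f.subst g) = coeff 1 f * coeff 1 g := by
  rw [coeff_subst_eq_sum hg (show 1 < 2 by norm_num)]
  simp [sum_range_succ, coeff_one]

theorem coeff_pow_self (hg : constantCoeff g = 0) (n : ℕ) :
    coeff n (g ^ n) = coeff 1 g ^ n := by
  obtain ⟨h, rfl⟩ := X_dvd_iff.mpr hg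
  simp [mul_pow, coeff_X_pow_mul']

theorem coeff_succ_pow_self (hg : constantCoeff g = 0) (n : ℕ) :
    coeff (n + 1) (g ^ n) = n * coeff 1 g ^ (n - 1) * coeff 2 g := by
  obtain ⟨h, rfl⟩ := X_dvd_iff.mpr hg
  rw [mul_pow, coeff_X_pow_mul', if_pos (by omega), add_tsub_cancel_left, coeff_one_pow,
    coeff_succ_X_mul, coeff_succ_X_mul, coeff_zero_eq_constantCoeff_apply]
  ring

theorem constantCoeff_add_eq_zero_of_X_pow_dvd (hg : constantCoeff g = 0) (hd : X ^ m ∣ d)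
    (hm : m ≠ 0) : constantCoeff (g + d) = 0 := by
  rw [map_add, hg, X_dvd_iff.mp ((dvd_pow_self X hm).trans hd), add_zero]

theorem coeff_add_pow_of_X_pow_dvd (hd : X ^ m ∣ d) (hn : n < 2 * m) (k : ℕ) :
    coeff n ((g + d) ^ k) = coeff n (g ^ k + g ^ (k - 1) * d * (k : R⟦X⟧)) := by
  have h2m : X ^ (2 * m) ∣ (g + d) ^ k - g ^ (k - 1) * d * (k : R⟦X⟧) - g ^ k := by
    rw [mul_comm, pow_mul]
    exact (pow_dvd_pow_of_dvd hd 2).trans (sq_dvd_add_pow_sub_sub d g k)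
  have := X_pow_dvd_iff.mp h2m n hn
  simp only [map_sub, map_add] at this ⊢
  linear_combination this

theorem coeff_subst_add_of_X_pow_dvd_of_lt (hg : constantCoeff g = 0) (hd : X ^ m ∣ d)
    (hn : n < 2 * m) :
    coeff n (f.subst (g + d)) = coeff n (f.subst g + (d⁄dX R f).subst g * d) := by
  have hgd := constantCoeff_add_eq_zero_of_X_pow_dvd hg hd (by omega)
  have hn2 : n < n + 2 := by omega
  rw [coeff_subst_eq_sum hgd hn2, map_add, coeff_subst_eq_sum hg hn2,
    coeff_subst_mul_eq_sum hg n.lt_succ_self]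
  simp_rw [coeff_add_pow_of_X_pow_dvd hd hn, map_add, mul_add, sum_add_distrib, coeff_derivative]
  congr 1
  rw [sum_range_succ']
  simp only [← map_natCast C, coeff_mul_C, Nat.add_sub_cancel, Nat.cast_zero, mul_zero, add_zero,
    Nat.cast_succ]
  exact sum_congr rfl fun k _ => by ring

theorem X_pow_dvd_subst_add_sub (hg : constantCoeff g = 0) (hd : X ^ m ∣ d) :
    X ^ m ∣ f.subst (g + d) - f.subst g := by
  refine X_pow_dvd_iff.mpr fun n hn => ?_
  rw [map_sub, coeff_subst_add_of_X_pow_dvd_of_lt hg hd (by omega), map_add,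
    X_pow_dvd_iff.mp (hd.mul_left _) n hn]
  ring

theorem coeff_mul_of_X_pow_dvd (f : R⟦X⟧) (hd : X ^ m ∣ d) :
    coeff m (f * d) = constantCoeff f * coeff m d := by
  obtain ⟨e, rfl⟩ := hd
  simp [mul_left_comm f, coeff_X_pow_mul']

theorem coeff_succ_mul_of_X_pow_dvd (f : R⟦X⟧) (hd : X ^ m ∣ d) :
    coeff (m + 1) (f * d) = constantCoeff f * coeff (m + 1) d + coeff 1 f * coeff m d := by
  obtain ⟨e, rfl⟩ := hd
  rw [mul_left_comm, coeff_X_pow_mul', coeff_X_pow_mul', coeff_X_pow_mul', if_pos (by omega),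
    if_pos (by omega), if_pos le_rfl, add_tsub_cancel_left, Nat.sub_self, coeff_one_mul,
    coeff_zero_eq_constantCoeff_apply]
  ring

theorem coeff_subst_add_of_X_pow_dvd (hg : constantCoeff g = 0) (hd : X ^ m ∣ d)
    (hm : m ≠ 0) :
    coeff m (f.subst (g + d)) = coeff m (f.subst g) + coeff 1 f * coeff m d := by
  rw [coeff_subst_add_of_X_pow_dvd_of_lt hg hd (by omega), map_add, coeff_mul_of_X_pow_dvd _ hd,
    constantCoeff_subst_of_constantCoeff_eq_zero hg, ← coeff_zero_eq_constantCoeff_apply,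
    coeff_derivative]
  ring

theorem coeff_succ_subst_add_of_X_pow_dvd (hg : constantCoeff g = 0) (hd : X ^ m ∣ d)
    (hm : 2 ≤ m) :
    coeff (m + 1) (f.subst (g + d)) = coeff (m + 1) (f.subst g) + coeff 1 f * coeff (m + 1) d +
      2 * coeff 2 f * coeff 1 g * coeff m d := by
  rw [coeff_subst_add_of_X_pow_dvd_of_lt hg hd (by omega), map_add,
    coeff_succ_mul_of_X_pow_dvd _ hd, constantCoeff_subst_of_constantCoeff_eq_zero hg,
    coeff_one_subst hg,
    ← coeff_zero_eq_constantCoeff_apply, coeff_derivative, coeff_derivative]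
  ring

theorem add_C_mul_X_pow_subst {h : R⟦X⟧} (hh : constantCoeff h = 0) (s : R) :
    (f + C s * X ^ m).subst h = f.subst h + C s * h ^ m := by
  have hh' := HasSubst.of_constantCoeff_zero' hh
  rw [subst_add hh', subst_mul hh', subst_pow hh', subst_X hh', subst_C]
  rfl

variable (s : R) (hg : constantCoeff g = 0) (hd : X ^ m ∣ d)
include hg hd

theorem X_pow_dvd_add_C_mul_X_pow_subst_add_sub (hm : m ≠ 0) :
    X ^ m ∣ (f + C s * X ^ m).subst (g + d) - f.subst g := by
  have hgd := constantCoeff_add_eq_zero_of_X_pow_dvd hg hd hm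
  rw [add_C_mul_X_pow_subst hgd, add_sub_right_comm]
  exact dvd_add (X_pow_dvd_subst_add_sub hg hd)
    (dvd_mul_of_dvd_right (pow_dvd_pow_of_dvd (X_dvd_iff.mpr hgd) m) _)

theorem coeff_add_C_mul_X_pow_subst_add (hm : 2 ≤ m) :
    coeff m ((f + C s * X ^ m).subst (g + d)) =
      coeff m (f.subst g) + s * coeff 1 g ^ m + coeff 1 f * coeff m d := by
  have hd₁ : coeff 1 d = 0 := X_pow_dvd_iff.mp hd 1 (by omega)
  have hgd := constantCoeff_add_eq_zero_of_X_pow_dvd hg hd (by omega)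
  rw [add_C_mul_X_pow_subst hgd, map_add, coeff_subst_add_of_X_pow_dvd hg hd (by omega),
    coeff_C_mul,
    coeff_pow_self hgd, map_add, hd₁, add_zero]
  ring

theorem coeff_succ_add_C_mul_X_pow_subst_add (hm : 3 ≤ m) :
    coeff (m + 1) ((f + C s * X ^ m).subst (g + d)) =
      coeff (m + 1) (f.subst g) + s * (m * coeff 1 g ^ (m - 1) * coeff 2 g) +
        coeff 1 f * coeff (m + 1) d + 2 * coeff 2 f * coeff 1 g * coeff m d := by
  have hd₁ : coeff 1 d = 0 := X_pow_dvd_iff.mp hd 1 (by omega)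
  have hd₂ : coeff 2 d = 0 := X_pow_dvd_iff.mp hd 2 (by omega)
  have hgd := constantCoeff_add_eq_zero_of_X_pow_dvd hg hd (by omega)
  rw [add_C_mul_X_pow_subst hgd, map_add, coeff_succ_subst_add_of_X_pow_dvd hg hd (by omega),
    coeff_C_mul, coeff_succ_pow_self hgd, map_add, map_add, hd₁, hd₂, add_zero, add_zero]
  ring

end Coefficients

section Solving

variable {R : Type*} [CommRing R] {m : ℕ}

theorem exists_coeff_subst_add_C_mul_X_pow_eq {B G w : R⟦X⟧} (hB : constantCoeff B = 0)
    (hG : constantCoeff G = 0) (hB₁ : coeff 1 B = -1) (hG₁ : coeff 1 G = -1)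
    (hw₁ : coeff 1 w = 1) (hm : 3 ≤ m) (hme : Even m) (h2 : IsUnit (2 : R))
    (hdet : IsUnit (((m : R) - 2) * (coeff 2 G - coeff 2 B))) :
    ∃ t u : R,
      coeff m (w.subst ((G + C u * X ^ m).subst (B + C t * X ^ m))) =
        coeff m ((B + C t * X ^ m).subst (G + C u * X ^ m)) ∧
      coeff (m + 1) (w.subst ((G + C u * X ^ m).subst (B + C t * X ^ m))) =
        coeff (m + 1) ((B + C t * X ^ m).subst (G + C u * X ^ m)) := by
  have hdvd (r : R) : X ^ m ∣ C r * X ^ m := dvd_mul_left _ _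
  have hcm (r : R) : coeff m (C r * X ^ m) = r := by simp
  have hcm₁ (r : R) : coeff (m + 1) (C r * X ^ m) = 0 := by simp
  have heven : (-1 : R) ^ m = 1 := hme.neg_one_pow
  have hodd : (-1 : R) ^ (m - 1) = -1 := (Nat.Even.sub_odd (by omega) hme odd_one).neg_one_pow
  have hW : constantCoeff (G.subst B) = 0 := by
    rw [constantCoeff_subst_of_constantCoeff_eq_zero hB, hG]
  have hW₁ : coeff 1 (G.subst B) = 1 := by rw [coeff_one_subst hB, hB₁, hG₁]; ring
  have lhs (t u : R) :
      coeff m (w.subst ((G + C u * X ^ m).subst (B + C t * X ^ m))) =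
        coeff m (w.subst (G.subst B)) + (u - t) ∧
      coeff (m + 1) (w.subst ((G + C u * X ^ m).subst (B + C t * X ^ m))) =
        coeff (m + 1) (w.subst (G.subst B)) - m * coeff 2 B * u - 2 * coeff 2 G * t +
          2 * coeff 2 w * (u - t) := by
    have hV := X_pow_dvd_add_C_mul_X_pow_subst_add_sub (f := G) u hB (hdvd t) (by omega)
    set V := (G + C u * X ^ m).subst (B + C t * X ^ m)
    rw [← add_sub_cancel (G.subst B) V, coeff_subst_add_of_X_pow_dvd hW hV (by omega),
      coeff_succ_subst_add_of_X_pow_dvd hW hV (by omega), map_sub, map_sub,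
      coeff_add_C_mul_X_pow_subst_add u hB (hdvd t) (by omega),
      coeff_succ_add_C_mul_X_pow_subst_add u hB (hdvd t) hm, hcm, hcm₁, hB₁, hG₁, hw₁, hW₁,
      heven, hodd]
    constructor <;> ring
  have rhs (t u : R) :
      coeff m ((B + C t * X ^ m).subst (G + C u * X ^ m)) = coeff m (B.subst G) + (t - u) ∧
      coeff (m + 1) ((B + C t * X ^ m).subst (G + C u * X ^ m)) =
        coeff (m + 1) (B.subst G) - m * coeff 2 G * t - 2 * coeff 2 B * u := by
    rw [coeff_add_C_mul_X_pow_subst_add t hG (hdvd u) (by omega),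
      coeff_succ_add_C_mul_X_pow_subst_add t hG (hdvd u) hm, hcm, hcm₁, hB₁, hG₁, heven, hodd]
    constructor <;> ring
  obtain ⟨i₂, hi₂⟩ := h2.exists_right_inv
  obtain ⟨iₑ, hiₑ⟩ := hdet.exists_right_inv
  set s := i₂ * (coeff m (w.subst (G.subst B)) - coeff m (B.subst G))
  set q := coeff (m + 1) (B.subst G) - coeff (m + 1) (w.subst (G.subst B)) +
    2 * coeff 2 w * s - (m - 2) * coeff 2 G * s
  refine ⟨iₑ * q + s, iₑ * q, ?_, ?_⟩
  · rw [(lhs _ _).1, (rhs _ _).1]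
    linear_combination (coeff m (B.subst G) - coeff m (w.subst (G.subst B))) * hi₂
  · rw [(lhs _ _).2, (rhs _ _).2]
    linear_combination q * hiₑ

end Solving

section SeriesWithCoeffs

variable {R : Type*} [CommRing R]

noncomputable def seriesWithCoeffs (x₂ x₃ : R) (b : ℕ → R) (m : ℕ) (t : R) : R⟦X⟧ :=
  mk fun k => if k = 0 then 0 else if k = 1 then -1 else if k = 2 then x₂ else if k = 3 then x₃
    else if k = m then t else b k

variable (x₂ x₃ : R) (b : ℕ → R) {m : ℕ} (t : R)

@[simp]
theorem constantCoeff_seriesWithCoeffs : constantCoeff (seriesWithCoeffs x₂ x₃ b m t) = 0 := by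
  simp [seriesWithCoeffs, ← coeff_zero_eq_constantCoeff_apply]

@[simp]
theorem coeff_one_seriesWithCoeffs : coeff 1 (seriesWithCoeffs x₂ x₃ b m t) = -1 := by
  simp [seriesWithCoeffs]

theorem coeff_seriesWithCoeffs (hm : 4 ≤ m) :
    coeff 2 (seriesWithCoeffs x₂ x₃ b m t) = x₂ ∧ coeff 3 (seriesWithCoeffs x₂ x₃ b m t) = x₃ ∧
      (∀ k, 4 ≤ k → k ≠ m → coeff k (seriesWithCoeffs x₂ x₃ b m t) = b k) ∧
      coeff m (seriesWithCoeffs x₂ x₃ b m t) = t := by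
  refine ⟨by simp [seriesWithCoeffs], by simp [seriesWithCoeffs], fun k hk hkm => ?_, ?_⟩
  · simp [seriesWithCoeffs, hkm, show k ≠ 0 ∧ k ≠ 1 ∧ k ≠ 2 ∧ k ≠ 3 by omega]
  · simp [seriesWithCoeffs, show m ≠ 0 ∧ m ≠ 1 ∧ m ≠ 2 ∧ m ≠ 3 by omega]

theorem seriesWithCoeffs_eq_add (hm : 4 ≤ m) :
    seriesWithCoeffs x₂ x₃ b m t = seriesWithCoeffs x₂ x₃ b m 0 + C t * X ^ m := by
  ext k
  by_cases hk : k = m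
  · subst hk
    simp [(coeff_seriesWithCoeffs x₂ x₃ b _ hm).2.2.2]
  · simp [seriesWithCoeffs, coeff_X_pow, hk]

theorem exists_coeff_subst_seriesWithCoeffs_eq {y₂ y₃ : R} (c : ℕ → R) {w : R⟦X⟧}
    (hw₁ : coeff 1 w = 1) (hm : 4 ≤ m) (hme : Even m) (h2 : IsUnit (2 : R))
    (hdet : IsUnit (((m : R) - 2) * (y₂ - x₂))) :
    ∃ t u : R,
      coeff m (w.subst ((seriesWithCoeffs y₂ y₃ c m u).subst (seriesWithCoeffs x₂ x₃ b m t))) =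
        coeff m ((seriesWithCoeffs x₂ x₃ b m t).subst (seriesWithCoeffs y₂ y₃ c m u)) ∧
      coeff (m + 1)
          (w.subst ((seriesWithCoeffs y₂ y₃ c m u).subst (seriesWithCoeffs x₂ x₃ b m t))) =
        coeff (m + 1) ((seriesWithCoeffs x₂ x₃ b m t).subst (seriesWithCoeffs y₂ y₃ c m u)) := by
  rw [← (coeff_seriesWithCoeffs x₂ x₃ b 0 hm).1, ← (coeff_seriesWithCoeffs y₂ y₃ c 0 hm).1] at hdet
  obtain ⟨t, u, h⟩ := exists_coeff_subst_add_C_mul_X_pow_eq (constantCoeff_seriesWithCoeffs ..)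
    (constantCoeff_seriesWithCoeffs ..) (coeff_one_seriesWithCoeffs ..)
    (coeff_one_seriesWithCoeffs ..) hw₁ (by omega) hme h2 hdet
  refine ⟨t, u, ?_⟩
  rwa [seriesWithCoeffs_eq_add x₂ x₃ b t hm, seriesWithCoeffs_eq_add y₂ y₃ c u hm]

end SeriesWithCoeffs

end PowerSeries

theorem exists_coeffs_solving_Em_of_not_two_mod_p_general {R F : Type*} [CommRing R] [Field F]
    {p : ℕ} (hp5 : 5 ≤ p) [CharP F p] [Algebra F R]
    (b₂ b₃ c₂ c₃ : F) (hne : c₂ - b₂ ≠ 0)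
    (α : PowerSeries R ≃ₐ[R] PowerSeries R)
    (hα1 : PowerSeries.coeff 1 (α PowerSeries.X) = 1)
    (m : ℕ) (hm4 : 4 ≤ m) (hmeven : Even m) (hmod : ¬ m ≡ 2 [MOD p])
    (b c : ℕ → R) :
    ∃ bm cm : R, ∃ β γ : PowerSeries R ≃ₐ[R] PowerSeries R, GAc1 β ∧ GAc1 γ ∧
      (PowerSeries.coeff 1 (β PowerSeries.X) = -1 ∧
        PowerSeries.coeff 2 (β PowerSeries.X) = algebraMap F R b₂ ∧
        PowerSeries.coeff 3 (β PowerSeries.X) = algebraMap F R b₃ ∧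
        (∀ k, 4 ≤ k → k ≠ m → PowerSeries.coeff k (β PowerSeries.X) = b k) ∧
        PowerSeries.coeff m (β PowerSeries.X) = bm) ∧
      (PowerSeries.coeff 1 (γ PowerSeries.X) = -1 ∧
        PowerSeries.coeff 2 (γ PowerSeries.X) = algebraMap F R c₂ ∧
        PowerSeries.coeff 3 (γ PowerSeries.X) = algebraMap F R c₃ ∧
        (∀ k, 4 ≤ k → k ≠ m → PowerSeries.coeff k (γ PowerSeries.X) = c k) ∧
        PowerSeries.coeff m (γ PowerSeries.X) = cm) ∧
      PowerSeries.coeff m ((β * γ * α) PowerSeries.X) =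
        PowerSeries.coeff m ((γ * β) PowerSeries.X) ∧
      PowerSeries.coeff (m + 1) ((β * γ * α) PowerSeries.X) =
        PowerSeries.coeff (m + 1) ((γ * β) PowerSeries.X) := by
  open PowerSeries in
  set ι := algebraMap F R
  have h2 : IsUnit (2 : R) := by
    rw [← map_ofNat ι 2]
    exact (Ring.two_ne_zero (by rw [ringChar.eq F p]; omega)).isUnit.map ι
  have hdet : IsUnit (((m : R) - 2) * (ι c₂ - ι b₂)) := by
    have hmF : (m : F) - 2 ≠ 0 :=
      sub_ne_zero.mpr fun h => hmod ((CharP.natCast_eq_natCast F p).mp (by exact_mod_cast h))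
    rw [← map_natCast ι, ← map_ofNat ι 2, ← map_sub, ← map_sub, ← map_mul]
    exact (mul_ne_zero hmF hne).isUnit.map ι
  obtain ⟨t, u, h_m, h_m₁⟩ :=
    exists_coeff_subst_seriesWithCoeffs_eq (ι b₂) (ι b₃) b c hα1 hm4 hmeven h2 hdet
  set gβ := seriesWithCoeffs (ι b₂) (ι b₃) b m t
  set gγ := seriesWithCoeffs (ι c₂) (ι c₃) c m u
  let β := substAlgEquiv gβ (constantCoeff_seriesWithCoeffs ..) (by simp [gβ])
  let γ := substAlgEquiv gγ (constantCoeff_seriesWithCoeffs ..) (by simp [gγ])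
  have hβγα : (β * γ * α) X = (α X).subst (gγ.subst gβ) := by
    rw [AlgEquiv.mul_apply, AlgEquiv.mul_apply, substAlgEquiv_apply, substAlgEquiv_apply,
      subst_comp_subst_apply (HasSubst.of_constantCoeff_zero' (constantCoeff_seriesWithCoeffs ..))
        (HasSubst.of_constantCoeff_zero' (constantCoeff_seriesWithCoeffs ..))]
  have hγβ : (γ * β) X = gβ.subst gγ := by
    rw [AlgEquiv.mul_apply, substAlgEquiv_X, substAlgEquiv_apply]
  refine ⟨t, u, β, γ, gAc1_substAlgEquiv .., gAc1_substAlgEquiv .., ?_, ?_, ?_, ?_⟩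
  · rw [substAlgEquiv_X]
    exact ⟨coeff_one_seriesWithCoeffs .., coeff_seriesWithCoeffs _ _ _ _ hm4⟩
  · rw [substAlgEquiv_X]
    exact ⟨coeff_one_seriesWithCoeffs .., coeff_seriesWithCoeffs _ _ _ _ hm4⟩
  · rwa [hβγα, hγβ]
  · rwa [hβγα, hγβ]

/-- Lemma `claimA`: let `p ≥ 5` be prime, `F ⊆ R` a field of
characteristic `p`, `b₂, b₃, c₂, c₃ ∈ F` with `c₂ - b₂ ≠ 0`, `a₂ = 2(b₂ - c₂)`,
`a₃ = 4(b₂ - c₂)²`, and `α ∈ GA^c_1(R)` with `α(X) = X + a₂X² + a₃X³ + ⋯`. Let `m ≥ 4` be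
even with `m ≢ 2 (mod p)`. Then for arbitrary prescribed coefficients `bₖ, cₖ` (`k ≥ 4`,
`k ≠ m`) there exist `bₘ, cₘ ∈ R` such that the automorphisms `β, γ` determined by
`β(X) = -X + b₂X² + b₃X³ + Σ_{k≥4} bₖXᵏ`, `γ(X) = -X + c₂X² + c₃X³ + Σ_{k≥4} cₖXᵏ` satisfy
`(βγα)(X)ₘ = (γβ)(X)ₘ` and `(βγα)(X)ₘ₊₁ = (γβ)(X)ₘ₊₁`. -/
theorem exists_coeffs_solving_Em_of_not_two_mod_p {R F : Type*} [CommRing R] [Field F]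
    {p : ℕ} (hp : p.Prime) (hp5 : 5 ≤ p) [CharP F p] [Algebra F R]
    (hinj : Function.Injective (algebraMap F R))
    (b₂ b₃ c₂ c₃ : F) (hne : c₂ - b₂ ≠ 0)
    (α : PowerSeries R ≃ₐ[R] PowerSeries R) (hα : GAc1 α)
    (hα1 : PowerSeries.coeff 1 (α PowerSeries.X) = 1)
    (hα2 : PowerSeries.coeff 2 (α PowerSeries.X) = algebraMap F R (2 * (b₂ - c₂)))
    (hα3 : PowerSeries.coeff 3 (α PowerSeries.X) = algebraMap F R (4 * (b₂ - c₂) ^ 2))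
    (m : ℕ) (hm4 : 4 ≤ m) (hmeven : Even m) (hmod : ¬ m ≡ 2 [MOD p])
    (b c : ℕ → R) :
    ∃ bm cm : R, ∃ β γ : PowerSeries R ≃ₐ[R] PowerSeries R, GAc1 β ∧ GAc1 γ ∧
      (PowerSeries.coeff 1 (β PowerSeries.X) = -1 ∧
        PowerSeries.coeff 2 (β PowerSeries.X) = algebraMap F R b₂ ∧
        PowerSeries.coeff 3 (β PowerSeries.X) = algebraMap F R b₃ ∧
        (∀ k, 4 ≤ k → k ≠ m → PowerSeries.coeff k (β PowerSeries.X) = b k) ∧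
        PowerSeries.coeff m (β PowerSeries.X) = bm) ∧
      (PowerSeries.coeff 1 (γ PowerSeries.X) = -1 ∧
        PowerSeries.coeff 2 (γ PowerSeries.X) = algebraMap F R c₂ ∧
        PowerSeries.coeff 3 (γ PowerSeries.X) = algebraMap F R c₃ ∧
        (∀ k, 4 ≤ k → k ≠ m → PowerSeries.coeff k (γ PowerSeries.X) = c k) ∧
        PowerSeries.coeff m (γ PowerSeries.X) = cm) ∧
      PowerSeries.coeff m ((β * γ * α) PowerSeries.X) =
        PowerSeries.coeff m ((γ * β) PowerSeries.X) ∧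
      PowerSeries.coeff (m + 1) ((β * γ * α) PowerSeries.X) =
        PowerSeries.coeff (m + 1) ((γ * β) PowerSeries.X) :=
  exists_coeffs_solving_Em_of_not_two_mod_p_general hp5 b₂ b₃ c₂ c₃ hne α hα1 m hm4 hmeven hmod b c
end
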